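/- arXiv:1907.08868 — 4 statements merged into one kernel-verified Lean document; each statement's English description precedes it below -/
import Mathlib

section
/- Let Λ be a square domain, β > 0, f ∈ Harm(Λ)^⊥, and σ = −(Δ_Λ)^{−1} f. Then the IV-GFF m with zero boundary condition satisfies E^IV_{β,Λ,0}[ e^{⟨m,f⟩} ] ≤ exp( ⟨σ,f⟩/(2β) ). -/
open scoped BigOperators
open MeasureTheory

noncomputable section

namespace IVGFF

attribute [local instance] Classical.propDecidable

/-- Vertices of the square lattice. -/
abbrev V : Type := ℤ × ℤ

/-- The square box with corner `c` and side-length `L`. -/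
def box (c : V) (L : ℕ) : Finset V :=
  (Finset.Icc c.1 (c.1 + (L : ℤ) - 1)) ×ˢ (Finset.Icc c.2 (c.2 + (L : ℤ) - 1))

/-- The boundary of the box with corner `c` and side-length `L`. -/
def bdry (c : V) (L : ℕ) : Finset V :=
  (box c L).filter fun j =>
    j.1 = c.1 ∨ j.1 = c.1 + (L : ℤ) - 1 ∨ j.2 = c.2 ∨ j.2 = c.2 + (L : ℤ) - 1

/-- The interior of the box with corner `c` and side-length `L`. -/
def intr (c : V) (L : ℕ) : Finset V := box c L \ bdry c L

/-- Adjacency in the square lattice: `ℓ¹`-distance one. -/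
def adj (j l : V) : Prop := |j.1 - l.1| + |j.2 - l.2| = 1

/-- The edges of the box (each edge appearing once, in a fixed orientation). -/
def edges (c : V) (L : ℕ) : Finset (V × V) :=
  ((box c L) ×ˢ (box c L)).filter fun p =>
    adj p.1 p.2 ∧ (p.1.1 < p.2.1 ∨ (p.1.1 = p.2.1 ∧ p.1.2 < p.2.2))

/-- Graph distance in the box graph, which coincides with `ℓ¹`-distance. -/
def gdist (j l : V) : ℕ := (|j.1 - l.1| + |j.2 - l.2|).toNat

/-- Distance between two finite sets of vertices. -/
def distFS (A B : Finset V) : ℕ := sInf {n : ℕ | ∃ j ∈ A, ∃ l ∈ B, gdist j l = n}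

/-- Inner product `⟨f, g⟩ = Σ_{j ∈ Λ} f_j g_j` of real fields. -/
def dot (c : V) (L : ℕ) (f g : V → ℝ) : ℝ := ∑ j ∈ box c L, f j * g j

/-- Inner product of an integer field with a real field. -/
def dotI (c : V) (L : ℕ) (m : V → ℤ) (f : V → ℝ) : ℝ := ∑ j ∈ box c L, (m j : ℝ) * f j

/-- The graph Laplacian `(Δ_Λ f)_j = Σ_{l ∼ j} (f_l − f_j)`. -/
def lap (c : V) (L : ℕ) (f : V → ℝ) : V → ℝ :=
  fun j => ∑ l ∈ (box c L).filter (fun l => adj j l), (f l - f j)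

/-- Dirichlet energy `Σ_{j∼l} (g_j − g_l)²` for integer fields. -/
def energyI (c : V) (L : ℕ) (g : V → ℤ) : ℝ :=
  ∑ p ∈ edges c L, ((g p.1 : ℝ) - (g p.2 : ℝ)) ^ 2

/-- Dirichlet energy `Σ_{j∼l} (φ_j − φ_l)²` for real fields. -/
def energyR (c : V) (L : ℕ) (φ : V → ℝ) : ℝ :=
  ∑ p ∈ edges c L, (φ p.1 - φ p.2) ^ 2

/-- Integer-valued configurations with boundary condition `h` (extended by `0` off the box). -/
def ivConfigs (c : V) (L : ℕ) (h : V → ℤ) : Set (V → ℤ) :=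
  {g | (∀ j ∈ bdry c L, g j = h j) ∧ ∀ j, j ∉ box c L → g j = 0}

/-- The IV-GFF Boltzmann weight. -/
def ivWeight (c : V) (L : ℕ) (β : ℝ) (g : V → ℤ) : ℝ :=
  Real.exp (-(β / 2) * energyI c L g)

/-- Partition function of the IV-GFF. -/
def ivZ (c : V) (L : ℕ) (β : ℝ) (h : V → ℤ) : ℝ :=
  ∑' g : ↥(ivConfigs c L h), ivWeight c L β g.1

/-- Probability of an event under the IV-GFF `P^IV_{β,Λ,h}`. -/
def ivProb (c : V) (L : ℕ) (β : ℝ) (h : V → ℤ) (A : Set (V → ℤ)) : ℝ :=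
  (∑' g : ↥(ivConfigs c L h ∩ A), ivWeight c L β g.1) / ivZ c L β h

/-- Expectation under the IV-GFF `E^IV_{β,Λ,h}`. -/
def ivExp (c : V) (L : ℕ) (β : ℝ) (h : V → ℤ) (F : (V → ℤ) → ℝ) : ℝ :=
  (∑' g : ↥(ivConfigs c L h), ivWeight c L β g.1 * F g.1) / ivZ c L β h

/-- Probability under the symmetrized IV-GFF `P^{IV-Sym}_{β,Λ,h}`. -/
def ivSymProb (c : V) (L : ℕ) (β : ℝ) (h : V → ℤ) (A : Set (V → ℤ)) : ℝ :=
  (ivProb c L β h A + ivProb c L β (fun j => -h j) A) / 2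

/-- Expectation under the symmetrized IV-GFF `E^{IV-Sym}_{β,Λ,h}`. -/
def ivSymExp (c : V) (L : ℕ) (β : ℝ) (h : V → ℤ) (F : (V → ℤ) → ℝ) : ℝ :=
  (ivExp c L β h F + ivExp c L β (fun j => -h j) F) / 2

/-- Extension of interior values `x` by boundary values `h` (and by `0` off the box). -/
def extend (c : V) (L : ℕ) (h : V → ℝ) (x : ↥(intr c L) → ℝ) : V → ℝ :=
  fun j => if hj : j ∈ intr c L then x ⟨j, hj⟩ else if j ∈ bdry c L then h j else 0

/-- Partition function of the (real-valued) GFF. -/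
def gffZ (c : V) (L : ℕ) (β : ℝ) (h : V → ℝ) : ℝ :=
  ∫ x : ↥(intr c L) → ℝ, Real.exp (-(β / 2) * energyR c L (extend c L h x))

/-- Expectation under the GFF `E^GFF_{β,Λ,h}`. -/
def gffExp (c : V) (L : ℕ) (β : ℝ) (h : V → ℝ) (F : (V → ℝ) → ℝ) : ℝ :=
  (∫ x : ↥(intr c L) → ℝ,
      F (extend c L h x) * Real.exp (-(β / 2) * energyR c L (extend c L h x))) / gffZ c L β h

/-- Expectation under the symmetrized GFF `E^{GFF-Sym}_{β,Λ,h}`. -/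
def gffSymExp (c : V) (L : ℕ) (β : ℝ) (h : V → ℝ) (F : (V → ℝ) → ℝ) : ℝ :=
  (gffExp c L β h F + gffExp c L β (fun j => -h j) F) / 2

/-- Complex-valued expectation under the GFF. -/
def gffExpC (c : V) (L : ℕ) (β : ℝ) (h : V → ℝ) (F : (V → ℝ) → ℂ) : ℂ :=
  (∫ x : ↥(intr c L) → ℝ,
      F (extend c L h x) * (Real.exp (-(β / 2) * energyR c L (extend c L h x)) : ℂ)) /
    (gffZ c L β h : ℂ)

/-- One-step transition kernel of the simple random walk on the box, killed at the boundary: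
rate `1/4` from an interior vertex to each neighbour. -/
def rwKernel (c : V) (L : ℕ) (j k : V) : ℝ :=
  if j ∈ intr c L ∧ adj j k then 1 / 4 else 0

/-- `n`-step transition probabilities of the killed walk. -/
def rwIter (c : V) (L : ℕ) : ℕ → V → V → ℝ
  | 0 => fun j k => if j = k then 1 else 0
  | n + 1 => fun j k => ∑ m ∈ box c L, rwIter c L n j m * rwKernel c L m k

/-- The Green's function `G_Λ(j,l)`: expected occupation time of `l` (for `l` interior) by the
continuous-time simple random walk started at `j` and killed at `∂Λ`; each interior holding
time has expectation `1/4`. -/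
def green (c : V) (L : ℕ) (j l : V) : ℝ := (1 / 4) * ∑' n : ℕ, rwIter c L n j l

/-- The harmonic measure `Hm_Λ(j,l)`: for `l ∈ ∂Λ`, the probability that the walk started
at `j` first hits the boundary at `l`. -/
def harmMeas (c : V) (L : ℕ) (j l : V) : ℝ := ∑' n : ℕ, rwIter c L n j l

/-- A real, even, normalized trigonometric polynomial
`λ(x) = 1 + 2 Σ_{q=1}^N λ̂_q cos(qx)` with coefficients `coef` and degree `N`. -/
def trigPoly (coef : ℕ → ℝ) (N : ℕ) (x : ℝ) : ℝ :=
  1 + 2 * ∑ q ∈ Finset.Icc 1 N, coef q * Real.cos ((q : ℝ) * x)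

/-- `(Γ,η,θ)`-sub-Gaussian coefficients (at inverse temperature `β`). -/
def subGaussian (β Γ η θ : ℝ) (coef : ℕ → ℝ) : Prop :=
  ∀ q : ℕ, 1 ≤ q → |coef q| ≤ Γ * Real.exp ((η + θ / β) * (q : ℝ) ^ 2)

/-- The Fejér kernel `F_N(x) = 1 + Σ_{q=1}^{N−1} 2(1 − q/N) cos(qx)`. -/
def fejer (N : ℕ) (x : ℝ) : ℝ :=
  1 + ∑ q ∈ Finset.Icc 1 (N - 1), 2 * (1 - (q : ℝ) / (N : ℝ)) * Real.cos ((q : ℝ) * x)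

/-- The (finite) support of a charge density within the box. -/
def suppF (c : V) (L : ℕ) (ρ : V → ℤ) : Finset V := (box c L).filter fun j => ρ j ≠ 0

/-- `ρ` is a charge density on the box: nonempty support contained in the interior. -/
def IsDensity (c : V) (L : ℕ) (ρ : V → ℤ) : Prop :=
  (∃ j, ρ j ≠ 0) ∧ ∀ j, ρ j ≠ 0 → j ∈ intr c L

/-- The total charge `Q(ρ)`. -/
def Qcharge (c : V) (L : ℕ) (ρ : V → ℤ) : ℤ := ∑ j ∈ box c L, ρ j

/-- Diameter of a finite set of vertices in graph distance. -/
def diamF (s : Finset V) : ℕ := s.sup fun j => s.sup fun l => gdist j l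

/-- The modified diameter `d_Λ(ρ)`. -/
def dLam (c : V) (L : ℕ) (ρ : V → ℤ) : ℕ :=
  if Qcharge c L ρ ≠ 0 then
    max (diamF (suppF c L ρ)) (distFS (suppF c L ρ) (bdry c L))
  else diamF (suppF c L ρ)

/-- `‖ρ‖₂² = Σ_j ρ_j²`. -/
def norm2sq (c : V) (L : ℕ) (ρ : V → ℤ) : ℝ := ∑ j ∈ box c L, ((ρ j : ℝ)) ^ 2

/-- The `2^k × 2^k` square with corner `a`, intersected with the box. -/
def sqAt (c : V) (L k : ℕ) (a : V) : Finset V :=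
  (box c L).filter fun j =>
    j.1 - a.1 ∈ Finset.Icc (0 : ℤ) (2 ^ k - 1) ∧ j.2 - a.2 ∈ Finset.Icc (0 : ℤ) (2 ^ k - 1)

/-- `s` is a `2^k × 2^k` square in the box. -/
def IsSqr (c : V) (L k : ℕ) (s : Finset V) : Prop :=
  s.card = min (box c L).card (2 ^ (2 * k)) ∧ ∃ a ∈ box c L, s = sqAt c L k a

/-- `S` is a cover of the support of `ρ` by `2^k × 2^k` squares. -/
def IsCover (c : V) (L k : ℕ) (ρ : V → ℤ) (S : Finset (Finset V)) : Prop :=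
  (∀ s ∈ S, IsSqr c L k s) ∧ ∀ j ∈ suppF c L ρ, ∃ s ∈ S, j ∈ s

/-- `S` is a minimal cover of the support of `ρ` by `2^k × 2^k` squares. -/
def IsMinCover (c : V) (L k : ℕ) (ρ : V → ℤ) (S : Finset (Finset V)) : Prop :=
  IsCover c L k ρ S ∧ ∀ S' : Finset (Finset V), IsCover c L k ρ S' → S.card ≤ S'.card

/-- `n(ρ) = ⌈log₂(M d_Λ(ρ)^α)⌉` with `M = 2^16`. -/
def nIdx (c : V) (L : ℕ) (α : ℝ) (ρ : V → ℤ) : ℕ :=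
  ⌈Real.logb 2 ((2 : ℝ) ^ 16 * (dLam c L ρ : ℝ) ^ α)⌉₊

/-- The separated part `S_k^sep(ρ)` of a cover `S` at scale `k ≥ 1`, with `M = 2^16`. -/
def sepOf (c : V) (L k : ℕ) (α : ℝ) (ρ : V → ℤ) (S : Finset (Finset V)) : Finset (Finset V) :=
  if 1 < S.card then
    S.filter fun s => ∀ s' ∈ S, s' ≠ s →
      (2 : ℝ) * 2 ^ 16 * (2 : ℝ) ^ (α * ((k : ℝ) + 1)) ≤ (distFS s s' : ℝ)
  else if Qcharge c L ρ = 0 then ∅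
  else if 2 ^ (k + 1) ≤ distFS (suppF c L ρ) (bdry c L) then S else ∅

end IVGFF

/-!
Completing the square: by summation by parts `⟨m, f⟩` is the Dirichlet form of `m` and `σ`, and
`⟨σ, f⟩ = E(σ)`, so `-(β/2) E(m) + ⟨m, f⟩ = -(β/2) E(m - σ/β) + ⟨σ, f⟩/(2β)`. Hence the
expectation equals `exp(⟨σ, f⟩/(2β)) Θ(-σ/β) / Θ(0)`, where `Θ(x) = ∑_{m ∈ ℤ^{Λ°}} exp(-Q(m + x))`
is the theta series of the positive definite form `Q = (β/2) E` on interior fields.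

A theta series is maximal at `0`. Grouping pairs `(m, n)` by the parity of `m + n` and applying the
parallelogram law gives `Θ(s)² = ∑_e Θ'(e/2 + s) Θ'(e/2)`, `e ∈ {0,1}^{Λ°}`, for the theta series
`Θ'` of `2Q`; Cauchy–Schwarz then yields `Θ(s)⁴ ≤ Θ(2s) Θ(0)³`. Iterating,
`(Θ(t)/Θ(0))^(4^k) ≤ Θ(2^k t)/Θ(0)`, which stays bounded because `Θ` is `ℤ^{Λ°}`-periodic,
so `Θ(t) ≤ Θ(0)`.
-/

open Real

section LatticeTheta

variable {ι : Type*}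

lemma summable_exp_neg_mul_int_sq {a : ℝ} (ha : 0 < a) :
    Summable fun n : ℤ => exp (-a * n ^ 2) := by
  refine (summable_pow_mul_jacobiTheta₂_term_bound 0 (T := a / π) (by positivity) 0).congr
    fun n => ?_
  rw [pow_zero, one_mul]
  congr 1
  field_simp
  ring

lemma summable_prod_apply_of_nonneg [Fintype ι] {κ : ι → Type*} {f : ∀ i, κ i → ℝ}
    (hf₀ : ∀ i k, 0 ≤ f i k) (hf : ∀ i, Summable (f i)) :
    Summable fun m : ∀ i, κ i => ∏ i, f i (m i) := by
  classical
  refine summable_of_sum_le (c := ∏ i, ∑' k, f i k)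
    (fun m => Finset.prod_nonneg fun i _ => hf₀ i (m i)) fun s => ?_
  calc ∑ m ∈ s, ∏ i, f i (m i)
      ≤ ∑ m ∈ Fintype.piFinset fun i => s.image (· i), ∏ i, f i (m i) :=
        Finset.sum_le_sum_of_subset_of_nonneg
          (fun m hm => Fintype.mem_piFinset.2 fun i => Finset.mem_image_of_mem _ hm)
          fun m _ _ => Finset.prod_nonneg fun i _ => hf₀ i (m i)
    _ = ∏ i, ∑ k ∈ s.image (· i), f i k := (Finset.prod_univ_sum _ _).symm
    _ ≤ ∏ i, ∑' k, f i k :=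
        Finset.prod_le_prod (fun i _ => Finset.sum_nonneg fun k _ => hf₀ i k)
          fun i _ => Summable.sum_le_tsum _ (fun k _ => hf₀ i k) (hf i)

noncomputable def latticeTheta (Q : (ι → ℝ) → ℝ) (x : ι → ℝ) : ℝ :=
  ∑' m : ι → ℤ, exp (-Q fun i => m i + x i)

variable {Q : (ι → ℝ) → ℝ} {lam : ℝ}

lemma exp_neg_le_of_coercive [Fintype ι] (hlam : 0 ≤ lam) (hQ : ∀ x, lam * ∑ i, x i ^ 2 ≤ Q x)
    (m : ι → ℤ) (x : ι → ℝ) :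
    exp (-Q fun i => m i + x i) ≤
      exp (lam * ∑ i, x i ^ 2) * ∏ i, exp (-(lam / 2) * (m i : ℝ) ^ 2) := by
  rw [← exp_sum, ← exp_add, exp_le_exp]
  have hsq : ∑ i, ((m i : ℝ) ^ 2 / 2 - x i ^ 2) ≤ ∑ i, ((m i : ℝ) + x i) ^ 2 :=
    Finset.sum_le_sum fun i _ => by nlinarith [sq_nonneg ((m i : ℝ) + 2 * x i)]
  rw [Finset.sum_sub_distrib, ← Finset.sum_div] at hsq
  have := hQ fun i => m i + x i
  have hneg : ∑ i, -(lam / 2) * (m i : ℝ) ^ 2 = -(lam / 2) * ∑ i, (m i : ℝ) ^ 2 :=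
    (Finset.mul_sum _ _ _).symm
  rw [hneg]
  nlinarith [mul_le_mul_of_nonneg_left hsq hlam]

lemma summable_exp_neg_intCast_add [Fintype ι] (hlam : 0 < lam)
    (hQ : ∀ x, lam * ∑ i, x i ^ 2 ≤ Q x) (x : ι → ℝ) :
    Summable fun m : ι → ℤ => exp (-Q fun i => m i + x i) :=
  .of_nonneg_of_le (fun _ => (exp_pos _).le) (exp_neg_le_of_coercive hlam.le hQ · x)
    ((summable_prod_apply_of_nonneg (fun _ _ => (exp_pos _).le)
      fun _ => summable_exp_neg_mul_int_sq (half_pos hlam)).mul_left _)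

lemma latticeTheta_pos [Fintype ι] (hlam : 0 < lam) (hQ : ∀ x, lam * ∑ i, x i ^ 2 ≤ Q x)
    (x : ι → ℝ) : 0 < latticeTheta Q x :=
  (summable_exp_neg_intCast_add hlam hQ x).tsum_pos (fun _ => (exp_pos _).le) 0 (exp_pos _)

lemma latticeTheta_intCast_add (n : ι → ℤ) (x : ι → ℝ) :
    latticeTheta Q (fun i => n i + x i) = latticeTheta Q x := by
  refine (tsum_congr fun m => ?_).trans
    ((Equiv.addRight n).tsum_eq fun m : ι → ℤ => exp (-Q fun i => m i + x i))
  simp only [Equiv.coe_addRight, Pi.add_apply, Int.cast_add, add_assoc]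

lemma exists_forall_latticeTheta_le [Fintype ι] (hlam : 0 < lam)
    (hQ : ∀ x, lam * ∑ i, x i ^ 2 ≤ Q x) : ∃ C, ∀ x, latticeTheta Q x ≤ C := by
  set bound : (ι → ℤ) → ℝ :=
    fun m => exp (lam * Fintype.card ι) * ∏ i, exp (-(lam / 2) * (m i : ℝ) ^ 2)
  have hbound : Summable bound :=
    (summable_prod_apply_of_nonneg (fun _ _ => (exp_pos _).le)
      fun _ => summable_exp_neg_mul_int_sq (half_pos hlam)).mul_left _
  refine ⟨∑' m, bound m, fun x => ?_⟩
  have hfract : latticeTheta Q x = latticeTheta Q fun i => Int.fract (x i) := by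
    simpa only [Int.floor_add_fract] using
      (latticeTheta_intCast_add (Q := Q) (fun i => ⌊x i⌋) fun i => Int.fract (x i))
  rw [hfract]
  refine (summable_exp_neg_intCast_add hlam hQ _).tsum_le_tsum (fun m => ?_) hbound
  refine (exp_neg_le_of_coercive hlam.le hQ m _).trans
    (mul_le_mul_of_nonneg_right (exp_le_exp.2 (mul_le_mul_of_nonneg_left ?_ hlam.le))
      (Finset.prod_nonneg fun _ _ => (exp_pos _).le))
  calc ∑ i, Int.fract (x i) ^ 2 ≤ ∑ _i : ι, (1 : ℝ) :=
        Finset.sum_le_sum fun i _ => pow_le_one₀ (Int.fract_nonneg _) (Int.fract_lt_one _).le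
    _ = Fintype.card ι := by simp

lemma hasSum_latticeTheta_mul [Fintype ι] (hlam : 0 < lam)
    (hQ : ∀ x, lam * ∑ i, x i ^ 2 ≤ Q x) (x y : ι → ℝ) :
    HasSum (fun p : (ι → ℤ) × (ι → ℤ) =>
        exp (-Q fun i => p.1 i + x i) * exp (-Q fun i => p.2 i + y i))
      (latticeTheta Q x * latticeTheta Q y) := by
  have hx := summable_exp_neg_intCast_add hlam hQ x
  have hy := summable_exp_neg_intCast_add hlam hQ y
  have hxy := hx.mul_of_nonneg hy (fun _ => (exp_pos _).le) fun _ => (exp_pos _).le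
  exact hx.hasSum.mul hy.hasSum hxy

/-- Pairs `(m, n)` of lattice points, indexed by the parity `e` of `m + n` and by the halves
`k = (m + n - e) / 2`, `k' = (m - n - e) / 2`. -/
def parityEquiv : (ι → Bool) × (ι → ℤ) × (ι → ℤ) ≃ (ι → ℤ) × (ι → ℤ) where
  toFun p := (fun i => p.2.1 i + p.2.2 i + (p.1 i).toNat, fun i => p.2.1 i - p.2.2 i)
  invFun q := (fun i => decide ((q.1 i + q.2 i) % 2 = 1), fun i => (q.1 i + q.2 i) / 2,
    fun i => (q.1 i + q.2 i) / 2 - q.2 i)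
  left_inv := by
    rintro ⟨e, k, k'⟩
    refine Prod.ext (funext fun i => ?_) (Prod.ext (funext fun i => ?_) (funext fun i => ?_)) <;>
      cases h : e i <;> simp [h] <;> omega
  right_inv := by
    rintro ⟨m, n⟩
    refine Prod.ext (funext fun i => ?_) (funext fun i => ?_) <;>
      by_cases h : (m i + n i) % 2 = 1 <;> simp [h] <;> omega

lemma exp_neg_mul_exp_neg_of_parallelogram
    (hpar : ∀ x y, Q (x + y) + Q (x - y) = 2 * Q x + 2 * Q y) (a b : ι → ℝ) :
    exp (-Q (a + b)) * exp (-Q (a - b)) = exp (-(2 * Q a)) * exp (-(2 * Q b)) := by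
  rw [← exp_add, ← exp_add, ← neg_add, hpar, neg_add]

theorem latticeTheta_add_mul_latticeTheta_sub [Fintype ι] [DecidableEq ι]
    (hpar : ∀ x y, Q (x + y) + Q (x - y) = 2 * Q x + 2 * Q y)
    (hlam : 0 < lam) (hQ : ∀ x, lam * ∑ i, x i ^ 2 ≤ Q x) (u v : ι → ℝ) :
    latticeTheta Q (u + v) * latticeTheta Q (u - v) =
      ∑ e : ι → Bool, latticeTheta (fun x => 2 * Q x) (fun i => (e i).toNat / 2 + u i) *
        latticeTheta (fun x => 2 * Q x) (fun i => (e i).toNat / 2 + v i) := by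
  have hQ₂ : ∀ x, 2 * lam * ∑ i, x i ^ 2 ≤ 2 * Q x := fun x => by
    rw [mul_assoc]
    exact mul_le_mul_of_nonneg_left (hQ x) zero_le_two
  have hpoint : ∀ p : (ι → Bool) × (ι → ℤ) × (ι → ℤ),
      exp (-Q fun i => (parityEquiv p).1 i + (u + v) i) *
          exp (-Q fun i => (parityEquiv p).2 i + (u - v) i) =
        exp (-(2 * Q fun i => p.2.1 i + ((p.1 i).toNat / 2 + u i))) *
          exp (-(2 * Q fun i => p.2.2 i + ((p.1 i).toNat / 2 + v i))) := by
    rintro ⟨e, k, k'⟩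
    convert exp_neg_mul_exp_neg_of_parallelogram hpar (fun i => k i + ((e i).toNat / 2 + u i))
      (fun i => k' i + ((e i).toNat / 2 + v i)) using 5 <;> funext i <;> simp [parityEquiv] <;> ring
  have hall : HasSum (fun p : (ι → Bool) × (ι → ℤ) × (ι → ℤ) =>
      exp (-(2 * Q fun i => p.2.1 i + ((p.1 i).toNat / 2 + u i))) *
        exp (-(2 * Q fun i => p.2.2 i + ((p.1 i).toNat / 2 + v i))))
      (latticeTheta Q (u + v) * latticeTheta Q (u - v)) := by
    exact (parityEquiv.hasSum_iff.2
      (hasSum_latticeTheta_mul hlam hQ (u + v) (u - v))).congr_fun fun p => (hpoint p).symm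
  have hfib : ∀ e : ι → Bool, HasSum (fun q : (ι → ℤ) × (ι → ℤ) =>
      exp (-(2 * Q fun i => q.1 i + ((e i).toNat / 2 + u i))) *
        exp (-(2 * Q fun i => q.2 i + ((e i).toNat / 2 + v i))))
      (latticeTheta (fun x => 2 * Q x) (fun i => (e i).toNat / 2 + u i) *
        latticeTheta (fun x => 2 * Q x) (fun i => (e i).toNat / 2 + v i)) := fun e =>
    hasSum_latticeTheta_mul (mul_pos two_pos hlam) hQ₂ _ _
  exact (hall.prod_fiberwise hfib).unique (hasSum_fintype _)

theorem latticeTheta_pow_four_le [Fintype ι] [DecidableEq ι]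
    (hpar : ∀ x y, Q (x + y) + Q (x - y) = 2 * Q x + 2 * Q y)
    (hlam : 0 < lam) (hQ : ∀ x, lam * ∑ i, x i ^ 2 ≤ Q x) (s : ι → ℝ) :
    latticeTheta Q s ^ 4 ≤ latticeTheta Q (s + s) * latticeTheta Q 0 ^ 3 := by
  have hs0 := latticeTheta_add_mul_latticeTheta_sub hpar hlam hQ s 0
  have hss := latticeTheta_add_mul_latticeTheta_sub hpar hlam hQ s s
  have h00 := latticeTheta_add_mul_latticeTheta_sub hpar hlam hQ 0 0
  simp only [add_zero, sub_zero, sub_self, Pi.zero_apply] at hs0 hss h00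
  calc latticeTheta Q s ^ 4 = (latticeTheta Q s * latticeTheta Q s) ^ 2 := by ring
    _ ≤ _ := hs0 ▸ Finset.sum_mul_sq_le_sq_mul_sq _ _ _
    _ = latticeTheta Q (s + s) * latticeTheta Q 0 * (latticeTheta Q 0 * latticeTheta Q 0) := by
      simp only [hss, h00, sq]
    _ = latticeTheta Q (s + s) * latticeTheta Q 0 ^ 3 := by ring

theorem latticeTheta_le_latticeTheta_zero [Fintype ι]
    (hpar : ∀ x y, Q (x + y) + Q (x - y) = 2 * Q x + 2 * Q y)
    (hlam : 0 < lam) (hQ : ∀ x, lam * ∑ i, x i ^ 2 ≤ Q x) (t : ι → ℝ) :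
    latticeTheta Q t ≤ latticeTheta Q 0 := by
  classical
  obtain ⟨C, hC⟩ := exists_forall_latticeTheta_le hlam hQ
  have hθ₀ := latticeTheta_pos hlam hQ 0
  set r : (ι → ℝ) → ℝ := fun s => latticeTheta Q s / latticeTheta Q 0
  have hr₀ : ∀ s, 0 < r s := fun s => div_pos (latticeTheta_pos hlam hQ s) hθ₀
  have hr : ∀ s, r s ^ 4 ≤ r (s + s) := fun s => by
    rw [div_pow, div_le_div_iff₀ (by positivity) hθ₀]
    calc latticeTheta Q s ^ 4 * latticeTheta Q 0
        ≤ latticeTheta Q (s + s) * latticeTheta Q 0 ^ 3 * latticeTheta Q 0 :=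
          mul_le_mul_of_nonneg_right (latticeTheta_pow_four_le hpar hlam hQ s) hθ₀.le
      _ = latticeTheta Q (s + s) * latticeTheta Q 0 ^ 4 := by ring
  have hiter : ∀ k : ℕ, r t ^ 4 ^ k ≤ r ((2 : ℝ) ^ k • t) := by
    intro k
    induction k with
    | zero => simp
    | succ k ih =>
      calc r t ^ 4 ^ (k + 1) = (r t ^ 4 ^ k) ^ 4 := by rw [pow_succ, pow_mul]
        _ ≤ r ((2 : ℝ) ^ k • t) ^ 4 := pow_le_pow_left₀ (pow_nonneg (hr₀ t).le _) ih 4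
        _ ≤ r ((2 : ℝ) ^ (k + 1) • t) := by
          rw [pow_succ (2 : ℝ) k, mul_smul, two_smul, smul_add]
          exact hr _
  by_contra! hlt
  have hr₁ : 1 < r t := (one_lt_div hθ₀).2 hlt
  obtain ⟨k, hk⟩ := pow_unbounded_of_one_lt (C / latticeTheta Q 0) hr₁
  have hC' : r ((2 : ℝ) ^ k • t) ≤ C / latticeTheta Q 0 :=
    div_le_div_of_nonneg_right (hC _) hθ₀.le
  have hk4 : r t ^ k ≤ r t ^ 4 ^ k :=
    pow_le_pow_right₀ hr₁.le (Nat.lt_pow_self (by norm_num)).le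
  linarith [hiter k]

end LatticeTheta

namespace IVGFF

section ZeroExtension

variable {R : Type*} [Zero R] {c : V} {L : ℕ}

def zeroExt (c : V) (L : ℕ) (y : intr c L → R) : V → R :=
  fun j => if h : j ∈ intr c L then y ⟨j, h⟩ else 0

@[simp] lemma zeroExt_coe (y : intr c L → R) (i : intr c L) : zeroExt c L y i = y i :=
  dif_pos i.2

lemma zeroExt_of_notMem (y : intr c L → R) {j : V} (hj : j ∉ intr c L) :
    zeroExt c L y j = 0 :=
  dif_neg hj

end ZeroExtension

-- The decidability instances used in `edges` and `lap`, so that their filters match ours.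
attribute [local instance] Classical.propDecidable

variable {c : V} {L : ℕ}

lemma intCast_zeroExt (m : intr c L → ℤ) :
    (fun j => ((zeroExt c L m j : ℤ) : ℝ)) = zeroExt c L fun i : intr c L => (m i : ℝ) := by
  funext j
  by_cases hj : j ∈ intr c L <;> simp [zeroExt, hj]

lemma eq_zero_of_mem_ivConfigs_zero {g : V → ℤ} (hg : g ∈ ivConfigs c L 0) {j : V}
    (hj : j ∉ intr c L) : g j = 0 := by
  by_cases hb : j ∈ box c L
  · exact hg.1 j (by simpa [intr, hb] using hj)
  · exact hg.2 j hb

def intrEquivIvConfigs (c : V) (L : ℕ) : (intr c L → ℤ) ≃ ivConfigs c L 0 where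
  toFun m := ⟨zeroExt c L m,
    fun _ hj => zeroExt_of_notMem m fun h => (Finset.mem_sdiff.1 h).2 hj,
    fun _ hj => zeroExt_of_notMem m fun h => hj (Finset.mem_sdiff.1 h).1⟩
  invFun g i := g.1 i
  left_inv m := funext (zeroExt_coe m)
  right_inv g := Subtype.ext <| funext fun j => by
    show zeroExt c L (fun i => g.1 i) j = g.1 j
    by_cases hj : j ∈ intr c L
    · exact zeroExt_coe (fun i => g.1 i) ⟨j, hj⟩
    · rw [zeroExt_of_notMem _ hj, eq_zero_of_mem_ivConfigs_zero g.2 hj]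

lemma adj_comm {j l : V} : adj j l ↔ adj l j := by
  simp only [adj, abs_sub_comm j.1, abs_sub_comm j.2]

lemma not_adj_self (j : V) : ¬adj j j := by
  simp [adj]

lemma disjoint_edges_image_swap (c : V) (L : ℕ) :
    Disjoint (edges c L) ((edges c L).image Prod.swap) := by
  simp only [Finset.disjoint_left, Finset.mem_image, edges, Finset.mem_filter]
  rintro p ⟨-, -, hp⟩ ⟨q, ⟨-, -, hq⟩, rfl⟩
  simp only [Prod.fst_swap, Prod.snd_swap] at hp
  omega

lemma filter_adj_eq_edges_union_image_swap (c : V) (L : ℕ) :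
    (box c L ×ˢ box c L).filter (fun p => adj p.1 p.2) =
      edges c L ∪ (edges c L).image Prod.swap := by
  ext ⟨j, l⟩
  have hne : adj j l → j.1 ≠ l.1 ∨ j.2 ≠ l.2 := fun h => by
    by_contra! he
    exact not_adj_self j (Prod.ext he.1 he.2 ▸ h)
  simp only [edges, Finset.mem_filter, Finset.mem_union, Finset.mem_image, Finset.mem_product]
  constructor
  · rintro ⟨hbox, hadj⟩
    have := hne hadj
    by_cases hord : j.1 < l.1 ∨ j.1 = l.1 ∧ j.2 < l.2
    · exact Or.inl ⟨hbox, hadj, hord⟩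
    · exact Or.inr ⟨(l, j), ⟨hbox.symm, adj_comm.1 hadj, by dsimp only; omega⟩, rfl⟩
  · rintro (⟨hbox, hadj, -⟩ | ⟨⟨a, b⟩, ⟨hbox, hadj, -⟩, hswap⟩)
    · exact ⟨hbox, hadj⟩
    · obtain ⟨rfl, rfl⟩ := Prod.mk.inj hswap
      exact ⟨hbox.symm, adj_comm.1 hadj⟩

lemma sum_sum_adj_eq_sum_edges (F : V → V → ℝ) :
    ∑ j ∈ box c L, ∑ l ∈ (box c L).filter (fun l => adj j l), F j l =
      ∑ p ∈ edges c L, (F p.1 p.2 + F p.2 p.1) := by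
  simp_rw [Finset.sum_filter]
  rw [← Finset.sum_product' (f := fun j l => if adj j l then F j l else 0), ← Finset.sum_filter,
    filter_adj_eq_edges_union_image_swap, Finset.sum_union (disjoint_edges_image_swap c L),
    Finset.sum_image fun p _ q _ h => Prod.swap_injective h, ← Finset.sum_add_distrib]
  rfl

def dirichletForm (c : V) (L : ℕ) (φ ψ : V → ℝ) : ℝ :=
  ∑ p ∈ edges c L, (φ p.1 - φ p.2) * (ψ p.1 - ψ p.2)

lemma energyR_eq_dirichletForm (φ : V → ℝ) : energyR c L φ = dirichletForm c L φ φ :=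
  Finset.sum_congr rfl fun _ _ => sq _

lemma sum_mul_lap (φ ψ : V → ℝ) :
    ∑ j ∈ box c L, φ j * lap c L ψ j = -dirichletForm c L φ ψ := by
  simp only [lap, Finset.mul_sum, sum_sum_adj_eq_sum_edges, dirichletForm,
    ← Finset.sum_neg_distrib]
  exact Finset.sum_congr rfl fun _ _ => by ring

lemma dot_eq_dirichletForm {f σ : V → ℝ} (hf : ∀ j ∈ box c L, f j = -lap c L σ j)
    (φ : V → ℝ) : dot c L φ f = dirichletForm c L φ σ := by
  rw [dot, Finset.sum_congr rfl fun j hj => by rw [hf j hj, mul_neg], Finset.sum_neg_distrib,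
    sum_mul_lap, neg_neg]

lemma energyR_sub_smul {β : ℝ} (hβ : β ≠ 0) (φ σ : V → ℝ) :
    β / 2 * energyR c L (φ - β⁻¹ • σ) =
      β / 2 * energyR c L φ - dirichletForm c L φ σ + energyR c L σ / (2 * β) := by
  simp only [energyR, dirichletForm, Finset.mul_sum, Finset.sum_div, ← Finset.sum_sub_distrib,
    ← Finset.sum_add_distrib]
  refine Finset.sum_congr rfl fun p _ => ?_
  simp only [Pi.sub_apply, Pi.smul_apply, smul_eq_mul]
  field_simp
  ring

lemma energyR_zeroExt_add_add_energyR_zeroExt_sub (x y : intr c L → ℝ) :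
    energyR c L (zeroExt c L (x + y)) + energyR c L (zeroExt c L (x - y)) =
      2 * energyR c L (zeroExt c L x) + 2 * energyR c L (zeroExt c L y) := by
  have hadd : ∀ j, zeroExt c L (x + y) j = zeroExt c L x j + zeroExt c L y j := fun j => by
    by_cases hj : j ∈ intr c L <;> simp [zeroExt, hj]
  have hsub : ∀ j, zeroExt c L (x - y) j = zeroExt c L x j - zeroExt c L y j := fun j => by
    by_cases hj : j ∈ intr c L <;> simp [zeroExt, hj]
  simp only [energyR, hadd, hsub, Finset.mul_sum, ← Finset.sum_add_distrib]
  exact Finset.sum_congr rfl fun _ _ => by ring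

lemma ivWeight_zeroExt (β : ℝ) (m : intr c L → ℤ) :
    ivWeight c L β (zeroExt c L m) =
      exp (-(β / 2 * energyR c L (zeroExt c L fun i : intr c L => (m i : ℝ)))) := by
  rw [ivWeight, ← intCast_zeroExt, neg_mul]
  rfl

lemma ivWeight_mul_exp_dotI {β : ℝ} (hβ : β ≠ 0) {f σ : V → ℝ}
    (hf : ∀ j ∈ box c L, f j = -lap c L σ j) (hσ : ∀ j, j ∉ intr c L → σ j = 0)
    (m : intr c L → ℤ) :
    ivWeight c L β (zeroExt c L m) * exp (dotI c L (zeroExt c L m) f) =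
      exp (dot c L σ f / (2 * β)) *
        exp (-(β / 2 * energyR c L (zeroExt c L fun i : intr c L => (m i : ℝ) + -σ i / β))) := by
  have hshift : (zeroExt c L fun i : intr c L => (m i : ℝ) + -σ i / β) =
      (zeroExt c L fun i : intr c L => (m i : ℝ)) - β⁻¹ • σ := by
    funext j
    by_cases hj : j ∈ intr c L
    · simp [zeroExt, hj, div_eq_inv_mul, sub_eq_add_neg]
    · simp [zeroExt, hj, hσ j hj]
  have hdotI : dotI c L (zeroExt c L m) f =
      dirichletForm c L (zeroExt c L fun i : intr c L => (m i : ℝ)) σ := by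
    rw [← dot_eq_dirichletForm hf, ← intCast_zeroExt]
    rfl
  rw [ivWeight_zeroExt, hdotI, hshift, energyR_sub_smul hβ, dot_eq_dirichletForm hf,
    ← energyR_eq_dirichletForm, ← exp_add, ← exp_add]
  congr 1
  ring

lemma mem_box_zero {j : V} : j ∈ box 0 L ↔ 0 ≤ j.1 ∧ j.1 ≤ L - 1 ∧ 0 ≤ j.2 ∧ j.2 ≤ L - 1 := by
  simp [box, and_assoc]

lemma mem_intr_zero {j : V} : j ∈ intr 0 L ↔ 1 ≤ j.1 ∧ j.1 ≤ L - 2 ∧ 1 ≤ j.2 ∧ j.2 ≤ L - 2 := by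
  simp only [intr, bdry, Finset.mem_sdiff, Finset.mem_filter, mem_box_zero, Prod.fst_zero,
    Prod.snd_zero, zero_add]
  omega

lemma horizontal_mem_edges_zero {a b : ℤ} (ha : 0 ≤ a) (ha' : a ≤ L - 2) (hb : 0 ≤ b)
    (hb' : b ≤ L - 1) : ((a, b), (a + 1, b)) ∈ edges 0 L := by
  refine Finset.mem_filter.2 ⟨Finset.mem_product.2
    ⟨mem_box_zero.2 (by dsimp only; omega), mem_box_zero.2 (by dsimp only; omega)⟩, ?_, ?_⟩ <;>
    simp [adj]

lemma sq_le_mul_energyR_of_mem_intr {φ : V → ℝ} (hφ : ∀ j, j ∉ intr 0 L → φ j = 0) {j : V}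
    (hj : j ∈ intr 0 L) : φ j ^ 2 ≤ L * energyR 0 L φ := by
  obtain ⟨a, b⟩ := j
  rw [mem_intr_zero] at hj
  obtain ⟨N, hN⟩ : ∃ N : ℕ, (N : ℤ) = L - 1 - a := ⟨_, Int.toNat_of_nonneg (by omega)⟩
  set g : ℕ → ℝ := fun k => φ (a + k, b)
  have htel : φ (a, b) = ∑ k ∈ Finset.range N, (g k - g (k + 1)) := by
    rw [Finset.sum_range_sub', show g N = 0 from hφ _ (by rw [mem_intr_zero]; omega)]
    simp [g]
  have hrow : ∑ k ∈ Finset.range N, (g k - g (k + 1)) ^ 2 ≤ energyR 0 L φ := by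
    have hinj : Set.InjOn (fun k : ℕ => ((a + k, b), (a + k + 1, b))) (Finset.range N) :=
      fun k _ l _ h => by simpa using congrArg (fun p => p.1.1) h
    rw [energyR]
    refine le_trans (le_of_eq ?_) (Finset.sum_le_sum_of_subset_of_nonneg
      (s := (Finset.range N).image fun k : ℕ => ((a + k, b), (a + k + 1, b))) ?_
      fun _ _ _ => sq_nonneg _)
    · rw [Finset.sum_image hinj]
      simp [g, add_assoc]
    · intro p hp
      obtain ⟨k, hk, rfl⟩ := Finset.mem_image.1 hp
      have := Finset.mem_range.1 hk
      exact horizontal_mem_edges_zero (by omega) (by omega) (by omega) (by omega)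
  have hNL : (N : ℝ) ≤ L := by exact_mod_cast (show (N : ℤ) ≤ L by omega)
  calc φ (a, b) ^ 2 ≤ N * ∑ k ∈ Finset.range N, (g k - g (k + 1)) ^ 2 := by
        simpa [htel] using sq_sum_le_card_mul_sum_sq (s := Finset.range N)
          (f := fun k => g k - g (k + 1))
    _ ≤ L * energyR 0 L φ :=
        mul_le_mul hNL hrow (Finset.sum_nonneg fun _ _ => sq_nonneg _) (Nat.cast_nonneg _)

lemma sum_sq_le_energyR_zeroExt (y : intr 0 L → ℝ) :
    ∑ i, y i ^ 2 ≤ (L : ℝ) ^ 3 * energyR 0 L (zeroExt 0 L y) := by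
  set E := energyR 0 L (zeroExt 0 L y)
  have hE : 0 ≤ E := Finset.sum_nonneg fun _ _ => sq_nonneg _
  have hcard : (Fintype.card (intr 0 L) : ℝ) ≤ (L : ℝ) ^ 2 := by
    have hsub : (intr 0 L).card ≤ (box 0 L).card := Finset.card_le_card Finset.sdiff_subset
    have hbox : (box 0 L).card = L ^ 2 := by simp [box, sq]
    rw [Fintype.card_coe]
    exact_mod_cast hbox ▸ hsub
  calc ∑ i, y i ^ 2 ≤ ∑ _i : intr 0 L, (L : ℝ) * E := Finset.sum_le_sum fun i _ => by
        simpa using sq_le_mul_energyR_of_mem_intr (fun j hj => zeroExt_of_notMem y hj) i.2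
    _ = Fintype.card (intr 0 L) * ((L : ℝ) * E) := by simp
    _ ≤ (L : ℝ) ^ 2 * ((L : ℝ) * E) := mul_le_mul_of_nonneg_right hcard (by positivity)
    _ = (L : ℝ) ^ 3 * E := by ring

end IVGFF

open IVGFF

/-- Upper bound on the moment generating function of the IV-GFF with zero
boundary condition: `E[e^{⟨m,f⟩}] ≤ exp(⟨σ,f⟩/(2β))` for `f ∈ Harm(Λ)^⊥`. -/
theorem iv_mgf_upper_bound (L : ℕ) (hL : 2 < L) (β : ℝ) (hβ : 0 < β) (f σ : IVGFF.V → ℝ)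
    (hf : ∀ j ∈ IVGFF.box 0 L, f j = - IVGFF.lap 0 L σ j)
    (hσ : ∀ j, j ∉ IVGFF.intr 0 L → σ j = 0) :
    IVGFF.ivExp 0 L β 0 (fun m => Real.exp (IVGFF.dotI 0 L m f)) ≤
      Real.exp (IVGFF.dot 0 L σ f / (2 * β)) := by
  set Q : (intr 0 L → ℝ) → ℝ := fun y => β / 2 * energyR 0 L (zeroExt 0 L y)
  have hpar : ∀ x y, Q (x + y) + Q (x - y) = 2 * Q x + 2 * Q y := fun x y => by
    linear_combination β / 2 * energyR_zeroExt_add_add_energyR_zeroExt_sub x y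
  have hL₀ : (0 : ℝ) < L := by exact_mod_cast (by omega : 0 < L)
  have hQ : ∀ y, β / (2 * (L : ℝ) ^ 3) * ∑ i, y i ^ 2 ≤ Q y := fun y =>
    calc β / (2 * (L : ℝ) ^ 3) * ∑ i, y i ^ 2
        ≤ β / (2 * (L : ℝ) ^ 3) * ((L : ℝ) ^ 3 * energyR 0 L (zeroExt 0 L y)) :=
          mul_le_mul_of_nonneg_left (sum_sq_le_energyR_zeroExt y) (by positivity)
      _ = Q y := by simp only [Q]; field_simp
  have hlam : 0 < β / (2 * (L : ℝ) ^ 3) := by positivity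
  have hnum : ∑' g : ivConfigs 0 L 0, ivWeight 0 L β g * exp (dotI 0 L g f) =
      exp (dot 0 L σ f / (2 * β)) * latticeTheta Q fun i => -σ i / β := by
    rw [← (intrEquivIvConfigs 0 L).tsum_eq, latticeTheta, ← tsum_mul_left]
    exact tsum_congr (ivWeight_mul_exp_dotI hβ.ne' hf hσ)
  have hZ : ivZ 0 L β 0 = latticeTheta Q 0 := by
    rw [ivZ, ← (intrEquivIvConfigs 0 L).tsum_eq, latticeTheta]
    exact tsum_congr fun m => by simp only [Pi.zero_apply, add_zero]; exact ivWeight_zeroExt β m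
  rw [ivExp, hnum, hZ, mul_div_assoc]
  exact mul_le_of_le_one_right (exp_pos _).le ((div_le_one (latticeTheta_pos hlam hQ 0)).2
    (latticeTheta_le_latticeTheta_zero hpar hlam hQ _))
end
end

section
/- Let Λ be a square domain and let ρ : Λ → ℤ be a neutral charge density, i.e. supp(ρ) is nonempty, supp(ρ) ⊆ Λ°, and Σ_{j∈Λ} ρ_j = 0. Then there exist integers c_{{j,l}}, one for each edge {j,l} of Λ, such that |c_{{j,l}}| ≤ (1/2)·Σ_{j∈Λ} |ρ_j| for every edge, and for every function σ : Λ → ℝ, ⟨ρ, σ⟩ = Σ_{j∼l} c_{{j,l}}·(σ_j − σ_l) (with each edge appearing once, in a fixed orientation). -/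
open scoped BigOperators
open MeasureTheory

noncomputable section

namespace IVGFF

attribute [local instance] Classical.propDecidable

end IVGFF

namespace IVGFF

lemma sum_Icc_top' {M : Type*} [AddCommGroup M] (f : ℤ → M) (n : ℤ) (h : 0 ≤ n) :
    ∑ x ∈ Finset.Icc (0:ℤ) n, f x = (∑ x ∈ Finset.Icc (0:ℤ) (n-1), f x) + f n := by
  have hins : Finset.Icc (0:ℤ) n = insert n (Finset.Icc 0 (n-1)) := by
    ext x; simp only [Finset.mem_Icc, Finset.mem_insert]; omega
  rw [hins, Finset.sum_insert (by simp), add_comm]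

lemma abel_nat (a s : ℤ → ℝ) : ∀ n : ℕ,
    ∑ x ∈ Finset.Icc (0:ℤ) ((n:ℤ)-1),
        (∑ x' ∈ Finset.Icc (0:ℤ) x, a x') * (s x - s (x+1))
      = ∑ x ∈ Finset.Icc (0:ℤ) (n:ℤ), a x * s x
        - (∑ x' ∈ Finset.Icc (0:ℤ) (n:ℤ), a x') * s (n:ℤ)
  | 0 => by norm_num
  | (n+1) => by
    have IH := abel_nat a s n
    have h1 : ((n:ℕ):ℤ) + 1 = ((n+1:ℕ):ℤ) := by push_cast; ring
    rw [sum_Icc_top' (fun x => (∑ x' ∈ Finset.Icc (0:ℤ) x, a x') * (s x - s (x+1)))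
          (((n+1:ℕ):ℤ)-1) (by push_cast; omega),
        sum_Icc_top' (fun x => a x * s x) ((n+1:ℕ):ℤ) (by positivity),
        sum_Icc_top' a ((n+1:ℕ):ℤ) (by positivity)]
    have h2 : ((n+1:ℕ):ℤ) - 1 = (n:ℤ) := by push_cast; ring
    rw [h2] at *
    rw [← h1]
    linear_combination IH

lemma abel' (a s : ℤ → ℝ) (n : ℤ) (hn : 0 ≤ n) :
    ∑ x ∈ Finset.Icc (0:ℤ) (n-1),
        (∑ x' ∈ Finset.Icc (0:ℤ) x, a x') * (s x - s (x+1))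
      = ∑ x ∈ Finset.Icc (0:ℤ) n, a x * s x
        - (∑ x' ∈ Finset.Icc (0:ℤ) n, a x') * s n := by
  obtain ⟨m, rfl⟩ := Int.eq_ofNat_of_zero_le hn
  exact abel_nat a s m

lemma box_eq (L : ℕ) :
    box (0 : V) L = (Finset.Icc (0:ℤ) ((L:ℤ)-1)) ×ˢ (Finset.Icc (0:ℤ) ((L:ℤ)-1)) := by
  simp [box]

lemma half_bound (L : ℕ) (ρ : V → ℤ) (hneutral : ∑ j ∈ box 0 L, ρ j = 0)
    (S : Finset V) (hS : S ⊆ box 0 L) :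
    |((∑ j ∈ S, ρ j : ℤ) : ℝ)| ≤ (1/2) * ∑ j ∈ box 0 L, |(ρ j : ℝ)| := by
  have hsplit : ∑ j ∈ box 0 L \ S, ρ j + ∑ j ∈ S, ρ j = 0 := by
    rw [Finset.sum_sdiff hS]; exact hneutral
  have h1 : |∑ j ∈ S, ρ j| ≤ ∑ j ∈ S, |ρ j| := Finset.abs_sum_le_sum_abs _ _
  have h2 : |∑ j ∈ S, ρ j| ≤ ∑ j ∈ box 0 L \ S, |ρ j| := by
    have he : |∑ j ∈ S, ρ j| = |∑ j ∈ box 0 L \ S, ρ j| := by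
      rw [show ∑ j ∈ S, ρ j = -(∑ j ∈ box 0 L \ S, ρ j) by omega, abs_neg]
    rw [he]; exact Finset.abs_sum_le_sum_abs _ _
  have h3 : ∑ j ∈ box 0 L \ S, |ρ j| + ∑ j ∈ S, |ρ j| = ∑ j ∈ box 0 L, |ρ j| :=
    Finset.sum_sdiff hS
  have h4 : 2 * |∑ j ∈ S, ρ j| ≤ ∑ j ∈ box 0 L, |ρ j| := by omega
  have h5 : ((2 * |∑ j ∈ S, ρ j| : ℤ) : ℝ) ≤ ((∑ j ∈ box 0 L, |ρ j| : ℤ) : ℝ) := by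
    exact_mod_cast h4
  push_cast at h5 ⊢
  linarith

lemma edges_eq (L : ℕ) (hL : 2 < L) :
    edges (0 : V) L =
      (((Finset.Icc (0:ℤ) ((L:ℤ)-2)) ×ˢ (Finset.Icc (0:ℤ) ((L:ℤ)-1))).image
        (fun q : ℤ × ℤ => (((q.1, q.2) : V), ((q.1+1, q.2) : V))))
      ∪ (((Finset.Icc (0:ℤ) ((L:ℤ)-1)) ×ˢ (Finset.Icc (0:ℤ) ((L:ℤ)-2))).image
        (fun q : ℤ × ℤ => (((q.1, q.2) : V), ((q.1, q.2+1) : V)))) := by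
  ext ⟨⟨x1,y1⟩,⟨x2,y2⟩⟩
  simp only [edges, box_eq, adj, Finset.mem_union, Finset.mem_image, Finset.mem_filter,
    Finset.mem_product, Finset.mem_Icc, Prod.mk.injEq, Prod.exists]
  rw [Int.abs_eq_natAbs, Int.abs_eq_natAbs]
  constructor
  · rintro ⟨⟨⟨⟨hx1, hx1'⟩, hy1, hy1'⟩, ⟨hx2, hx2'⟩, hy2, hy2'⟩, hadj, hlex⟩
    have hor : (x2 = x1 + 1 ∧ y2 = y1) ∨ (x2 = x1 ∧ y2 = y1 + 1) := by omega
    rcases hor with ⟨h, h'⟩ | ⟨h, h'⟩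
    · exact Or.inl ⟨x1, y1, ⟨⟨hx1, by omega⟩, hy1, hy1'⟩, ⟨rfl, rfl⟩, by omega, by omega⟩
    · exact Or.inr ⟨x1, y1, ⟨⟨hx1, hx1'⟩, hy1, by omega⟩, ⟨rfl, rfl⟩, by omega, by omega⟩
  · rintro (⟨x, y, ⟨⟨hx, hx'⟩, hy, hy'⟩, ⟨h1, h2⟩, h3, h4⟩ |
            ⟨x, y, ⟨⟨hx, hx'⟩, hy, hy'⟩, ⟨h1, h2⟩, h3, h4⟩) <;>
    · subst h1; subst h2; subst h3; subst h4
      refine ⟨⟨⟨⟨?_, ?_⟩, ?_, ?_⟩, ⟨?_, ?_⟩, ?_, ?_⟩, ?_, ?_⟩ <;> omega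


attribute [local instance] Classical.propDecidable

/-- The explicit flow: route charges along rows to the last column, then down it. -/
noncomputable def ccFlow (L : ℕ) (ρ : V → ℤ) : V × V → ℤ := fun p =>
  if p.2 = ((p.1.1 + 1, p.1.2) : V) then
    ∑ j ∈ (box 0 L).filter (fun j => j.2 = p.1.2 ∧ j.1 ≤ p.1.1), ρ j
  else if p.2 = ((p.1.1, p.1.2 + 1) : V) ∧ p.1.1 = (L:ℤ) - 1 then
    ∑ j ∈ (box 0 L).filter (fun j => j.2 ≤ p.1.2), ρ j
  else 0

lemma ccFlow_H (L : ℕ) (ρ : V → ℤ) (x y : ℤ) :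
    ccFlow L ρ (((x, y) : V), ((x + 1, y) : V)) =
      ∑ j ∈ (box 0 L).filter (fun j => j.2 = y ∧ j.1 ≤ x), ρ j := by
  simp [ccFlow]

lemma ccFlow_V (L : ℕ) (ρ : V → ℤ) (x y : ℤ) :
    ccFlow L ρ (((x, y) : V), ((x, y + 1) : V)) =
      if x = (L:ℤ) - 1 then ∑ j ∈ (box 0 L).filter (fun j => j.2 ≤ y), ρ j else 0 := by
  have h1 : ¬ (((x, y + 1) : V) = ((x + 1, y) : V)) := by
    simp only [Prod.mk.injEq, not_and]; omega
  simp [ccFlow, h1]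

lemma filter_row (L : ℕ) (x y : ℤ) (hx : 0 ≤ x) (hx' : x ≤ (L:ℤ) - 1)
    (hy : 0 ≤ y) (hy' : y ≤ (L:ℤ) - 1) :
    (box (0:V) L).filter (fun j => j.2 = y ∧ j.1 ≤ x) = (Finset.Icc (0:ℤ) x) ×ˢ {y} := by
  ext ⟨u, v⟩
  simp only [box_eq, Finset.mem_filter, Finset.mem_product, Finset.mem_Icc,
    Finset.mem_singleton]
  constructor
  · rintro ⟨⟨h1, h2⟩, h3, h4⟩; exact ⟨⟨h1.1, h4⟩, h3⟩
  · rintro ⟨⟨h1, h2⟩, h3⟩; exact ⟨⟨⟨h1, by omega⟩, by omega, by omega⟩, h3, h2⟩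

lemma filter_low (L : ℕ) (y : ℤ) (hy : 0 ≤ y) (hy' : y ≤ (L:ℤ) - 1) :
    (box (0:V) L).filter (fun j => j.2 ≤ y) =
      (Finset.Icc (0:ℤ) ((L:ℤ)-1)) ×ˢ (Finset.Icc (0:ℤ) y) := by
  ext ⟨u, v⟩
  simp only [box_eq, Finset.mem_filter, Finset.mem_product, Finset.mem_Icc]
  constructor
  · rintro ⟨⟨h1, h2⟩, h3⟩; exact ⟨h1, h2.1, h3⟩
  · rintro ⟨h1, h2, h3⟩; exact ⟨⟨h1, h2, by omega⟩, h3⟩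

end IVGFF

/-- A neutral charge density can be written as a combination of discrete
gradients along edges, with integer coefficients bounded by half the `ℓ¹`-norm of `ρ`. -/
theorem neutral_density_decomposition (L : ℕ) (hL : 2 < L) (ρ : IVGFF.V → ℤ)
    (hρ : IVGFF.IsDensity 0 L ρ) (hneutral : ∑ j ∈ IVGFF.box 0 L, ρ j = 0) :
    ∃ cc : IVGFF.V × IVGFF.V → ℤ,
      (∀ p ∈ IVGFF.edges 0 L,
        (|cc p| : ℝ) ≤ (1 / 2) * ∑ j ∈ IVGFF.box 0 L, |(ρ j : ℝ)|) ∧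
      ∀ σ : IVGFF.V → ℝ,
        (∑ j ∈ IVGFF.box 0 L, (ρ j : ℝ) * σ j) =
          ∑ p ∈ IVGFF.edges 0 L, (cc p : ℝ) * (σ p.1 - σ p.2) := by
  classical
  have hL1 : (0:ℤ) ≤ (L:ℤ) - 1 := by omega
  refine ⟨IVGFF.ccFlow L ρ, ?_, ?_⟩
  · intro p hp
    simp only [IVGFF.ccFlow]
    split_ifs with h1 h2
    · exact IVGFF.half_bound L ρ hneutral _ (Finset.filter_subset _ _)
    · exact IVGFF.half_bound L ρ hneutral _ (Finset.filter_subset _ _)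
    · simp only [Int.cast_zero, abs_zero]
      have : (0:ℝ) ≤ ∑ j ∈ IVGFF.box 0 L, |(ρ j : ℝ)| :=
        Finset.sum_nonneg fun j _ => abs_nonneg _
      linarith
  · intro σ
    have hdisj : Disjoint
        ((((Finset.Icc (0:ℤ) ((L:ℤ)-2)) ×ˢ (Finset.Icc (0:ℤ) ((L:ℤ)-1))).image
          (fun q : ℤ × ℤ => (((q.1, q.2) : IVGFF.V), ((q.1+1, q.2) : IVGFF.V)))))
        ((((Finset.Icc (0:ℤ) ((L:ℤ)-1)) ×ˢ (Finset.Icc (0:ℤ) ((L:ℤ)-2))).image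
          (fun q : ℤ × ℤ => (((q.1, q.2) : IVGFF.V), ((q.1, q.2+1) : IVGFF.V))))) := by
      rw [Finset.disjoint_left]
      rintro p hp1 hp2
      simp only [Finset.mem_image, Finset.mem_product, Finset.mem_Icc, Prod.exists] at hp1 hp2
      obtain ⟨x, y, _, h1⟩ := hp1
      obtain ⟨x', y', _, h2⟩ := hp2
      rw [← h2] at h1
      simp only [Prod.mk.injEq] at h1
      omega
    have hinjH : ∀ q1 ∈ (Finset.Icc (0:ℤ) ((L:ℤ)-2)) ×ˢ (Finset.Icc (0:ℤ) ((L:ℤ)-1)),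
        ∀ q2 ∈ (Finset.Icc (0:ℤ) ((L:ℤ)-2)) ×ˢ (Finset.Icc (0:ℤ) ((L:ℤ)-1)),
        (fun q : ℤ × ℤ => (((q.1, q.2) : IVGFF.V), ((q.1+1, q.2) : IVGFF.V))) q1 =
          (fun q : ℤ × ℤ => (((q.1, q.2) : IVGFF.V), ((q.1+1, q.2) : IVGFF.V))) q2 → q1 = q2 := by
      intro a _ b _ h
      simp only [Prod.mk.injEq] at h
      exact Prod.ext h.1.1 h.1.2
    have hinjV : ∀ q1 ∈ (Finset.Icc (0:ℤ) ((L:ℤ)-1)) ×ˢ (Finset.Icc (0:ℤ) ((L:ℤ)-2)),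
        ∀ q2 ∈ (Finset.Icc (0:ℤ) ((L:ℤ)-1)) ×ˢ (Finset.Icc (0:ℤ) ((L:ℤ)-2)),
        (fun q : ℤ × ℤ => (((q.1, q.2) : IVGFF.V), ((q.1, q.2+1) : IVGFF.V))) q1 =
          (fun q : ℤ × ℤ => (((q.1, q.2) : IVGFF.V), ((q.1, q.2+1) : IVGFF.V))) q2 → q1 = q2 := by
      intro a _ b _ h
      simp only [Prod.mk.injEq] at h
      exact Prod.ext h.1.1 h.1.2
    have hImH : ∑ p ∈ (((Finset.Icc (0:ℤ) ((L:ℤ)-2)) ×ˢ (Finset.Icc (0:ℤ) ((L:ℤ)-1))).image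
          (fun q : ℤ × ℤ => (((q.1, q.2) : IVGFF.V), ((q.1+1, q.2) : IVGFF.V)))),
          (IVGFF.ccFlow L ρ p : ℝ) * (σ p.1 - σ p.2)
        = ∑ q ∈ (Finset.Icc (0:ℤ) ((L:ℤ)-2)) ×ˢ (Finset.Icc (0:ℤ) ((L:ℤ)-1)),
          (IVGFF.ccFlow L ρ (((q.1, q.2) : IVGFF.V), ((q.1+1, q.2) : IVGFF.V)) : ℝ) *
            (σ (q.1, q.2) - σ (q.1+1, q.2)) :=
      Finset.sum_image hinjH
    have hImV : ∑ p ∈ (((Finset.Icc (0:ℤ) ((L:ℤ)-1)) ×ˢ (Finset.Icc (0:ℤ) ((L:ℤ)-2))).image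
          (fun q : ℤ × ℤ => (((q.1, q.2) : IVGFF.V), ((q.1, q.2+1) : IVGFF.V)))),
          (IVGFF.ccFlow L ρ p : ℝ) * (σ p.1 - σ p.2)
        = ∑ q ∈ (Finset.Icc (0:ℤ) ((L:ℤ)-1)) ×ˢ (Finset.Icc (0:ℤ) ((L:ℤ)-2)),
          (IVGFF.ccFlow L ρ (((q.1, q.2) : IVGFF.V), ((q.1, q.2+1) : IVGFF.V)) : ℝ) *
            (σ (q.1, q.2) - σ (q.1, q.2+1)) :=
      Finset.sum_image hinjV
    have hH : ∑ q ∈ (Finset.Icc (0:ℤ) ((L:ℤ)-2)) ×ˢ (Finset.Icc (0:ℤ) ((L:ℤ)-1)),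
          (IVGFF.ccFlow L ρ (((q.1, q.2) : IVGFF.V), ((q.1+1, q.2) : IVGFF.V)) : ℝ) *
            (σ (q.1, q.2) - σ (q.1+1, q.2))
        = ∑ y ∈ Finset.Icc (0:ℤ) ((L:ℤ)-1),
            ((∑ x ∈ Finset.Icc (0:ℤ) ((L:ℤ)-1), (ρ (x, y) : ℝ) * σ (x, y))
              - (∑ x ∈ Finset.Icc (0:ℤ) ((L:ℤ)-1), (ρ (x, y) : ℝ)) * σ ((L:ℤ)-1, y)) := by
      rw [Finset.sum_product, Finset.sum_comm]
      refine Finset.sum_congr rfl ?_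
      intro y hy
      simp only [Finset.mem_Icc] at hy
      have hstep : ∀ x ∈ Finset.Icc (0:ℤ) ((L:ℤ)-2),
          (IVGFF.ccFlow L ρ (((x, y) : IVGFF.V), ((x+1, y) : IVGFF.V)) : ℝ) *
              (σ (x, y) - σ (x+1, y))
            = (∑ x' ∈ Finset.Icc (0:ℤ) x, (ρ (x', y) : ℝ)) * (σ (x, y) - σ (x+1, y)) := by
        intro x hx
        simp only [Finset.mem_Icc] at hx
        rw [IVGFF.ccFlow_H,
          IVGFF.filter_row L x y (by omega) (by omega) (by omega) (by omega)]
        congr 1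
        push_cast
        rw [Finset.sum_product]
        simp
      rw [Finset.sum_congr rfl hstep,
        show ((L:ℤ)-2) = ((L:ℤ)-1) - 1 by ring]
      exact IVGFF.abel' (fun x => (ρ (x, y) : ℝ)) (fun x => σ (x, y)) ((L:ℤ)-1) hL1
    have hV : ∑ q ∈ (Finset.Icc (0:ℤ) ((L:ℤ)-1)) ×ˢ (Finset.Icc (0:ℤ) ((L:ℤ)-2)),
          (IVGFF.ccFlow L ρ (((q.1, q.2) : IVGFF.V), ((q.1, q.2+1) : IVGFF.V)) : ℝ) *
            (σ (q.1, q.2) - σ (q.1, q.2+1))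
        = ∑ y ∈ Finset.Icc (0:ℤ) ((L:ℤ)-1),
            (∑ x ∈ Finset.Icc (0:ℤ) ((L:ℤ)-1), (ρ (x, y) : ℝ)) * σ ((L:ℤ)-1, y) := by
      rw [Finset.sum_product, Finset.sum_comm]
      have hcol : ∀ y ∈ Finset.Icc (0:ℤ) ((L:ℤ)-2),
          ∑ x ∈ Finset.Icc (0:ℤ) ((L:ℤ)-1),
            (IVGFF.ccFlow L ρ (((x, y) : IVGFF.V), ((x, y+1) : IVGFF.V)) : ℝ) *
              (σ (x, y) - σ (x, y+1))
          = (∑ y' ∈ Finset.Icc (0:ℤ) y, ∑ x ∈ Finset.Icc (0:ℤ) ((L:ℤ)-1), (ρ (x, y') : ℝ)) *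
              (σ ((L:ℤ)-1, y) - σ ((L:ℤ)-1, y+1)) := by
        intro y hy
        simp only [Finset.mem_Icc] at hy
        have hval : ∀ x ∈ Finset.Icc (0:ℤ) ((L:ℤ)-1),
            (IVGFF.ccFlow L ρ (((x, y) : IVGFF.V), ((x, y+1) : IVGFF.V)) : ℝ) *
                (σ (x, y) - σ (x, y+1))
              = if x = (L:ℤ)-1 then
                  ((∑ j ∈ (IVGFF.box 0 L).filter (fun j => j.2 ≤ y), ρ j : ℤ) : ℝ) *
                    (σ (x, y) - σ (x, y+1))
                else 0 := by
          intro x _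
          rw [IVGFF.ccFlow_V]
          split_ifs with h
          · rfl
          · simp
        rw [Finset.sum_congr rfl hval, Finset.sum_ite_eq' (Finset.Icc (0:ℤ) ((L:ℤ)-1))
            ((L:ℤ)-1) (fun x => ((∑ j ∈ (IVGFF.box 0 L).filter (fun j => j.2 ≤ y), ρ j : ℤ) : ℝ) *
              (σ (x, y) - σ (x, y+1))),
          if_pos (by simp only [Finset.mem_Icc]; omega)]
        congr 1
        rw [IVGFF.filter_low L y (by omega) (by omega)]
        push_cast
        rw [Finset.sum_product]
        exact Finset.sum_comm
      rw [Finset.sum_congr rfl hcol,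
        show ((L:ℤ)-2) = ((L:ℤ)-1) - 1 by ring,
        IVGFF.abel' (fun y' => ∑ x ∈ Finset.Icc (0:ℤ) ((L:ℤ)-1), (ρ (x, y') : ℝ))
          (fun y => σ ((L:ℤ)-1, y)) ((L:ℤ)-1) hL1]
      have hzero : ∑ y ∈ Finset.Icc (0:ℤ) ((L:ℤ)-1),
          ∑ x ∈ Finset.Icc (0:ℤ) ((L:ℤ)-1), (ρ (x, y) : ℝ) = 0 := by
        have h0 := congrArg (fun z : ℤ => (z : ℝ)) hneutral
        push_cast at h0
        rw [IVGFF.box_eq, Finset.sum_product] at h0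
        rw [Finset.sum_comm]
        exact h0
      rw [hzero]
      ring
    have hLHS : ∑ j ∈ IVGFF.box 0 L, (ρ j : ℝ) * σ j
        = ∑ y ∈ Finset.Icc (0:ℤ) ((L:ℤ)-1),
            ∑ x ∈ Finset.Icc (0:ℤ) ((L:ℤ)-1), (ρ (x, y) : ℝ) * σ (x, y) := by
      rw [IVGFF.box_eq, Finset.sum_product]
      exact Finset.sum_comm
    rw [IVGFF.edges_eq L hL, Finset.sum_union hdisj, hImH, hImV, hH, hV, hLHS,
      Finset.sum_sub_distrib]
    ring
end
end

section
/- Let Λ be a square domain, β > 0, and let h₁, h₂ : ∂Λ → ℤ satisfy h₁(j) ≤ h₂(j) for all j ∈ ∂Λ. Then P^IV_{β,Λ,h₁} is stochastically dominated by P^IV_{β,Λ,h₂}: for every bounded function g : ℤ^Λ → ℝ that is increasing in each coordinate (with respect to the pointwise order), Σ_m P^IV_{β,Λ,h₁}(m)·g(m) ≤ Σ_m P^IV_{β,Λ,h₂}(m)·g(m). -/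
open scoped BigOperators
open MeasureTheory

noncomputable section

namespace IVGFF

attribute [local instance] Classical.propDecidable

end IVGFF

/-!
Parametrise configurations by their interior heights and write `w_h(x)` for the weight of
the configuration with interior heights `x` and boundary values `h`. Since `(s, t) ↦ (s - t)²`
is submodular on `ℝ²`, the Dirichlet energy is submodular too, and for `h₁ ≤ h₂` this gives
Holley's lattice condition `w_{h₂}(a) w_{h₁}(b) ≤ w_{h₁}(a ⊓ b) w_{h₂}(a ⊔ b)`. The
Ahlswede–Daykin four functions theorem, passed from finite sets to infinite sums, turns it
into Holley's inequality for bounded increasing observables. The sums converge because a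
Poincaré inequality along columns bounds the weights by a product of discrete Gaussians.
-/

namespace IVGFF

open Filter Finset
open scoped FinsetFamily

section Holley

lemma sq_max_sub_max_add_sq_min_sub_min_le (a b c d : ℝ) :
    (max a b - max c d) ^ 2 + (min a b - min c d) ^ 2 ≤ (a - c) ^ 2 + (b - d) ^ 2 := by
  rcases le_total a b with h | h <;> rcases le_total c d with h' | h'
  · simp only [max_eq_right h, max_eq_right h', min_eq_left h, min_eq_left h']; linarith
  · simp only [max_eq_right h, max_eq_left h', min_eq_left h, min_eq_right h']
    nlinarith [mul_nonneg (sub_nonneg.2 h) (sub_nonneg.2 h')]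
  · simp only [max_eq_left h, max_eq_right h', min_eq_right h, min_eq_left h']
    nlinarith [mul_nonneg (sub_nonneg.2 h) (sub_nonneg.2 h')]
  · simp only [max_eq_left h, max_eq_left h', min_eq_right h, min_eq_right h']; linarith

theorem four_functions_theorem_tsum {α : Type*} [DistribLattice α] {f₁ f₂ f₃ f₄ : α → ℝ}
    (h₁ : 0 ≤ f₁) (h₂ : 0 ≤ f₂) (h₃ : 0 ≤ f₃) (h₄ : 0 ≤ f₄)
    (hs₁ : Summable f₁) (hs₂ : Summable f₂) (hs₃ : Summable f₃) (hs₄ : Summable f₄)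
    (h : ∀ a b, f₁ a * f₂ b ≤ f₃ (a ⊓ b) * f₄ (a ⊔ b)) :
    (∑' a, f₁ a) * ∑' a, f₂ a ≤ (∑' a, f₃ a) * ∑' a, f₄ a := by
  classical
  refine le_of_tendsto' (Tendsto.mul hs₁.hasSum hs₂.hasSum) fun s => ?_
  calc (∑ a ∈ s, f₁ a) * ∑ a ∈ s, f₂ a
      ≤ (∑ a ∈ s ⊼ s, f₃ a) * ∑ a ∈ s ⊻ s, f₄ a :=
        four_functions_theorem f₁ f₂ f₃ f₄ h₁ h₂ h₃ h₄ h s s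
    _ ≤ (∑' a, f₃ a) * ∑' a, f₄ a :=
        mul_le_mul (hs₃.sum_le_tsum _ fun a _ => h₃ a) (hs₄.sum_le_tsum _ fun a _ => h₄ a)
          (sum_nonneg fun a _ => h₄ a) (tsum_nonneg h₃)

lemma summable_mul_of_abs_le {α : Type*} {μ f : α → ℝ} {C : ℝ} (hμ : 0 ≤ μ) (hμs : Summable μ)
    (hf : ∀ a, |f a| ≤ C) : Summable fun a => μ a * f a :=
  (hμs.mul_right C).of_norm_bounded fun a => by
    rw [Real.norm_eq_abs, abs_mul, abs_of_nonneg (hμ a)]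
    exact mul_le_mul_of_nonneg_left (hf a) (hμ a)

theorem holley_tsum {α : Type*} [DistribLattice α] {μ ν f₁ f₂ : α → ℝ} {C : ℝ}
    (hμ : 0 ≤ μ) (hν : 0 ≤ ν) (hμs : Summable μ) (hνs : Summable ν)
    (hlat : ∀ a b, ν a * μ b ≤ μ (a ⊓ b) * ν (a ⊔ b)) (hf : f₁ ≤ f₂) (hf₂ : Monotone f₂)
    (hf₁C : ∀ a, |f₁ a| ≤ C) (hf₂C : ∀ a, |f₂ a| ≤ C) :
    (∑' a, μ a * f₁ a) * ∑' a, ν a ≤ (∑' a, ν a * f₂ a) * ∑' a, μ a := by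
  have hpos : ∀ {f : α → ℝ}, (∀ a, |f a| ≤ C) → ∀ a, 0 ≤ f a + C := fun {f} hC a => by
    linarith [neg_abs_le (f a), hC a]
  have hshift : ∀ {w f : α → ℝ}, 0 ≤ w → Summable w → (∀ a, |f a| ≤ C) →
      Summable (fun a => w a * (f a + C)) ∧
        ∑' a, w a * (f a + C) = ∑' a, w a * f a + (∑' a, w a) * C := fun {w f} hw hws hC => by
    have hwf := summable_mul_of_abs_le hw hws hC
    simp_rw [mul_add]
    exact ⟨hwf.add (hws.mul_right C), by rw [hwf.tsum_add (hws.mul_right C), tsum_mul_right]⟩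
  obtain ⟨hs₁, he₁⟩ := hshift hμ hμs hf₁C
  obtain ⟨hs₂, he₂⟩ := hshift hν hνs hf₂C
  have key := four_functions_theorem_tsum hν (fun a => mul_nonneg (hμ a) (hpos hf₁C a)) hμ
    (fun a => mul_nonneg (hν a) (hpos hf₂C a)) hνs hs₁ hμs hs₂ fun a b => by
      calc ν a * (μ b * (f₁ b + C)) = ν a * μ b * (f₁ b + C) := by ring
        _ ≤ μ (a ⊓ b) * ν (a ⊔ b) * (f₂ (a ⊔ b) + C) :=
          mul_le_mul (hlat a b) (by linarith [hf b, hf₂ (le_sup_right : b ≤ a ⊔ b)])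
            (hpos hf₁C b) (mul_nonneg (hμ _) (hν _))
        _ = μ (a ⊓ b) * (ν (a ⊔ b) * (f₂ (a ⊔ b) + C)) := by ring
  rw [he₁, he₂] at key
  linarith

end Holley

section Gaussian

lemma summable_exp_neg_mul_sq_sub {ε : ℝ} (hε : 0 < ε) (b : ℤ) :
    Summable fun d : ℤ => Real.exp (-(ε * ((d : ℝ) - b) ^ 2)) := by
  have hnat : Summable fun n : ℕ => Real.exp (-ε * (n : ℝ) ^ 2) :=
    Real.summable_exp_nat_mul_of_ge (by linarith) fun n => by
      exact_mod_cast Nat.le_self_pow two_ne_zero n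
  have hint : Summable fun d : ℤ => Real.exp (-ε * (d : ℝ) ^ 2) :=
    .of_nat_of_neg (by simpa using hnat) (by simpa using hnat)
  refine ((Equiv.subRight b).summable_iff.2 hint).congr fun d => ?_
  simp [neg_mul]

lemma summable_pi_prod_of_nonneg {ι κ : Type*} [Fintype ι] {ψ : ι → κ → ℝ}
    (h0 : ∀ i k, 0 ≤ ψ i k) (hs : ∀ i, Summable (ψ i)) :
    Summable fun x : ι → κ => ∏ i, ψ i (x i) := by
  classical
  refine summable_of_sum_le (c := ∏ i, ∑' k, ψ i k)
    (fun x => prod_nonneg fun i _ => h0 i (x i)) fun u => ?_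
  calc ∑ x ∈ u, ∏ i, ψ i (x i)
      ≤ ∑ x ∈ Fintype.piFinset (fun i => u.image fun y => y i), ∏ i, ψ i (x i) :=
        sum_le_sum_of_subset_of_nonneg
          (fun x hx => Fintype.mem_piFinset.2 fun i => mem_image_of_mem _ hx)
          (fun x _ _ => prod_nonneg fun i _ => h0 i (x i))
    _ = ∏ i, ∑ k ∈ u.image (fun y => y i), ψ i k := (prod_univ_sum _ _).symm
    _ ≤ ∏ i, ∑' k, ψ i k :=
        prod_le_prod (fun i _ => sum_nonneg fun k _ => h0 i k)
          fun i _ => (hs i).sum_le_tsum _ fun k _ => h0 i k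

lemma summable_exp_neg_mul_sum_sq_sub {ι : Type*} [Fintype ι] {ε : ℝ} (hε : 0 < ε)
    (b : ι → ℤ) :
    Summable fun x : ι → ℤ => Real.exp (-(ε * ∑ i, ((x i : ℝ) - b i) ^ 2)) := by
  refine (summable_pi_prod_of_nonneg (fun _ _ => (Real.exp_pos _).le)
    fun i => summable_exp_neg_mul_sq_sub hε (b i)).congr fun x => ?_
  rw [mul_sum, ← sum_neg_distrib, Real.exp_sum]

end Gaussian

section Box

variable {c : V} {L : ℕ}

lemma mem_box_iff {j : V} :
    j ∈ box c L ↔ c.1 ≤ j.1 ∧ j.1 ≤ c.1 + L - 1 ∧ c.2 ≤ j.2 ∧ j.2 ≤ c.2 + L - 1 := by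
  simp [box, and_assoc]

lemma mk_mem_bdry_of_mem_box {j : V} (hj : j ∈ box c L) : (j.1, c.2) ∈ bdry c L := by
  rw [mem_box_iff] at hj
  simp only [bdry, mem_filter, mem_box_iff, le_refl, true_or, or_true, and_true, true_and]
  omega

lemma mem_intr_or_mem_bdry_or_not_mem_box (c : V) (L : ℕ) (j : V) :
    j ∈ intr c L ∨ j ∈ bdry c L ∨ j ∉ box c L := by
  by_cases hb : j ∈ bdry c L
  · exact Or.inr (Or.inl hb)
  · by_cases hj : j ∈ box c L
    · exact Or.inl (mem_sdiff.2 ⟨hj, hb⟩)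
    · exact Or.inr (Or.inr hj)

open Classical in
lemma column_edge_mem_edges {a t : ℤ} (h₀ : (a, t) ∈ box c L) (h₁ : (a, t + 1) ∈ box c L) :
    ((a, t), (a, t + 1)) ∈ edges c L := by
  refine mem_filter.2 ⟨mem_product.2 ⟨h₀, h₁⟩, ?_, Or.inr ⟨rfl, lt_add_one t⟩⟩
  simp [adj]

lemma energyI_nonneg (g : V → ℤ) : 0 ≤ energyI c L g :=
  sum_nonneg fun _ _ => sq_nonneg _

lemma sum_sq_column_le_energyI (g : V → ℤ) {a : ℤ} {n : ℕ} (ha : (a, c.2 + n) ∈ box c L) :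
    ∑ t ∈ range n, ((g (a, c.2 + t) : ℝ) - g (a, c.2 + t + 1)) ^ 2 ≤ energyI c L g := by
  have hmem : ∀ t ≤ n, (a, c.2 + t) ∈ box c L := fun t ht => by
    rw [mem_box_iff] at ha ⊢; omega
  let e : ℕ → V × V := fun t => ((a, c.2 + t), (a, c.2 + t + 1))
  have he : Set.InjOn e (range n) := fun s _ t _ hst => by
    simpa [e] using congrArg (fun p : V × V => p.1.2) hst
  rw [energyI, ← sum_image (f := fun p : V × V => ((g p.1 : ℝ) - g p.2) ^ 2) he]
  refine sum_le_sum_of_subset_of_nonneg (image_subset_iff.2 fun t ht => ?_)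
    fun _ _ _ => sq_nonneg _
  have ht := mem_range.1 ht
  exact column_edge_mem_edges (hmem t ht.le) (by simpa [add_assoc] using hmem (t + 1) ht)

lemma sq_sub_le_mul_energyI (g : V → ℤ) {j : V} (hj : j ∈ box c L) :
    ((g (j.1, c.2) : ℝ) - g j) ^ 2 ≤ L * energyI c L g := by
  obtain ⟨-, -, hj₃, hj₄⟩ := mem_box_iff.1 hj
  set n := (j.2 - c.2).toNat
  have hn : c.2 + n = j.2 := by omega
  have hnL : (n : ℝ) ≤ L := by exact_mod_cast (show (n : ℤ) ≤ L by omega)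
  have htel : ∑ t ∈ range n, ((g (j.1, c.2 + t) : ℝ) - g (j.1, c.2 + t + 1))
      = g (j.1, c.2) - g j := by
    have := sum_range_sub' (fun t : ℕ => (g (j.1, c.2 + t) : ℝ)) n
    push_cast [add_assoc] at this ⊢
    rwa [add_zero, hn] at this
  have hcol := sum_sq_column_le_energyI g (a := j.1) (n := n) (by rwa [hn])
  calc ((g (j.1, c.2) : ℝ) - g j) ^ 2
      ≤ n * ∑ t ∈ range n, ((g (j.1, c.2 + t) : ℝ) - g (j.1, c.2 + t + 1)) ^ 2 := by
        simpa [htel] using sq_sum_le_card_mul_sum_sq (s := range n)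
          (f := fun t : ℕ => (g (j.1, c.2 + t) : ℝ) - g (j.1, c.2 + t + 1))
    _ ≤ L * energyI c L g := by gcongr

end Box

section Configurations

variable {c : V} {L : ℕ} {β : ℝ}

open Classical in
def extendI (c : V) (L : ℕ) (h : V → ℤ) (x : ↥(intr c L) → ℤ) : V → ℤ :=
  fun j => if hj : j ∈ intr c L then x ⟨j, hj⟩ else if j ∈ bdry c L then h j else 0

section extendI

variable {h : V → ℤ} {x : ↥(intr c L) → ℤ} {j : V}

lemma extendI_of_mem_intr (hj : j ∈ intr c L) : extendI c L h x j = x ⟨j, hj⟩ := dif_pos hj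

lemma extendI_of_mem_bdry (hj : j ∈ bdry c L) : extendI c L h x j = h j := by
  have hi : j ∉ intr c L := fun hi => (mem_sdiff.1 hi).2 hj
  rw [extendI, dif_neg hi, if_pos hj]

lemma extendI_of_not_mem_box (hj : j ∉ box c L) : extendI c L h x j = 0 := by
  have hi : j ∉ intr c L := fun hi => hj (mem_sdiff.1 hi).1
  have hb : j ∉ bdry c L := fun hb => hj (mem_filter.1 hb).1
  rw [extendI, dif_neg hi, if_neg hb]

lemma extendI_mem_ivConfigs : extendI c L h x ∈ ivConfigs c L h :=
  ⟨fun _ => extendI_of_mem_bdry, fun _ => extendI_of_not_mem_box⟩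

end extendI

def ivConfigsEquiv (c : V) (L : ℕ) (h : V → ℤ) : (↥(intr c L) → ℤ) ≃ ↥(ivConfigs c L h) where
  toFun x := ⟨extendI c L h x, extendI_mem_ivConfigs⟩
  invFun g j := g.1 j
  left_inv x := funext fun j => extendI_of_mem_intr j.2
  right_inv g := Subtype.ext <| funext fun j => by
    change extendI c L h (fun i => g.1 i) j = g.1 j
    rcases mem_intr_or_mem_bdry_or_not_mem_box c L j with hj | hj | hj
    · exact extendI_of_mem_intr hj
    · rw [extendI_of_mem_bdry hj, g.2.1 j hj]
    · rw [extendI_of_not_mem_box hj, g.2.2 j hj]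

lemma ivExp_eq_tsum (h : V → ℤ) (F : (V → ℤ) → ℝ) :
    ivExp c L β h F =
      (∑' x, ivWeight c L β (extendI c L h x) * F (extendI c L h x)) /
        ∑' x, ivWeight c L β (extendI c L h x) := by
  rw [ivExp, ivZ, ← (ivConfigsEquiv c L h).tsum_eq, ← (ivConfigsEquiv c L h).tsum_eq]
  rfl

lemma ivWeight_pos (g : V → ℤ) : 0 < ivWeight c L β g := Real.exp_pos _

/-- The `+ 1`s keep the constant positive when `L = 0` or the interior is empty. -/
lemma ivWeight_extendI_le (hβ : 0 ≤ β) (h : V → ℤ) (x : ↥(intr c L) → ℤ) :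
    ivWeight c L β (extendI c L h x) ≤
      Real.exp (-(β / (2 * ((L + 1) * ((intr c L).card + 1))) *
        ∑ j, ((x j : ℝ) - h (j.1.1, c.2)) ^ 2)) := by
  set E := energyI c L (extendI c L h x)
  have hE : 0 ≤ E := energyI_nonneg _
  set K : ℝ := (L + 1) * ((intr c L).card + 1)
  have hK : 0 < K := by positivity
  have hcol : ∀ j : ↥(intr c L), ((x j : ℝ) - h (j.1.1, c.2)) ^ 2 ≤ L * E := fun j => by
    have hj := (mem_sdiff.1 j.2).1
    have := sq_sub_le_mul_energyI (extendI c L h x) hj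
    rwa [extendI_of_mem_intr j.2, extendI_of_mem_bdry (mk_mem_bdry_of_mem_box hj),
      sub_sq_comm] at this
  have hsum : ∑ j : ↥(intr c L), ((x j : ℝ) - h (j.1.1, c.2)) ^ 2 ≤ K * E := by
    calc _ ≤ ∑ _j : ↥(intr c L), (L : ℝ) * E := sum_le_sum fun j _ => hcol j
      _ = (L * (intr c L).card) * E := by
        simp only [sum_const, card_univ, Fintype.card_coe, nsmul_eq_mul]; ring
      _ ≤ K * E := by gcongr; linarith
  rw [ivWeight, Real.exp_le_exp, neg_mul, neg_le_neg_iff]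
  calc _ ≤ β / (2 * K) * (K * E) := by gcongr
    _ = β / 2 * E := by field_simp

lemma summable_ivWeight_extendI (hβ : 0 < β) (h : V → ℤ) :
    Summable fun x : ↥(intr c L) → ℤ => ivWeight c L β (extendI c L h x) :=
  .of_nonneg_of_le (fun _ => (ivWeight_pos _).le) (ivWeight_extendI_le hβ.le h)
    (summable_exp_neg_mul_sum_sq_sub (by positivity) _)

lemma extendI_sup {h₁ h₂ : V → ℤ} (hle : ∀ j ∈ bdry c L, h₁ j ≤ h₂ j)
    (a b : ↥(intr c L) → ℤ) (j : V) :
    extendI c L h₂ (a ⊔ b) j = max (extendI c L h₂ a j) (extendI c L h₁ b j) := by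
  rcases mem_intr_or_mem_bdry_or_not_mem_box c L j with hj | hj | hj
  · simp only [extendI_of_mem_intr hj, Pi.sup_apply]
  · simp only [extendI_of_mem_bdry hj, max_eq_left (hle j hj)]
  · simp only [extendI_of_not_mem_box hj, max_self]

lemma extendI_inf {h₁ h₂ : V → ℤ} (hle : ∀ j ∈ bdry c L, h₁ j ≤ h₂ j)
    (a b : ↥(intr c L) → ℤ) (j : V) :
    extendI c L h₁ (a ⊓ b) j = min (extendI c L h₂ a j) (extendI c L h₁ b j) := by
  rcases mem_intr_or_mem_bdry_or_not_mem_box c L j with hj | hj | hj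
  · simp only [extendI_of_mem_intr hj, Pi.inf_apply]
  · simp only [extendI_of_mem_bdry hj, min_eq_right (hle j hj)]
  · simp only [extendI_of_not_mem_box hj, min_self]

lemma extendI_le_extendI {h₁ h₂ : V → ℤ} (hle : ∀ j ∈ bdry c L, h₁ j ≤ h₂ j)
    {x y : ↥(intr c L) → ℤ} (hxy : x ≤ y) (j : V) : extendI c L h₁ x j ≤ extendI c L h₂ y j := by
  rcases mem_intr_or_mem_bdry_or_not_mem_box c L j with hj | hj | hj
  · simpa only [extendI_of_mem_intr hj] using hxy _
  · simpa only [extendI_of_mem_bdry hj] using hle j hj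
  · simp only [extendI_of_not_mem_box hj, le_refl]

lemma energyI_inf_add_energyI_sup_le {h₁ h₂ : V → ℤ} (hle : ∀ j ∈ bdry c L, h₁ j ≤ h₂ j)
    (a b : ↥(intr c L) → ℤ) :
    energyI c L (extendI c L h₁ (a ⊓ b)) + energyI c L (extendI c L h₂ (a ⊔ b))
      ≤ energyI c L (extendI c L h₂ a) + energyI c L (extendI c L h₁ b) := by
  simp only [energyI, ← sum_add_distrib]
  refine sum_le_sum fun p _ => ?_
  simp only [extendI_sup hle, extendI_inf hle, Int.cast_max, Int.cast_min]
  linarith [sq_max_sub_max_add_sq_min_sub_min_le (extendI c L h₂ a p.1 : ℝ)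
    (extendI c L h₁ b p.1) (extendI c L h₂ a p.2) (extendI c L h₁ b p.2)]

lemma ivWeight_mul_le_ivWeight_inf_mul_ivWeight_sup {h₁ h₂ : V → ℤ} (hβ : 0 ≤ β)
    (hle : ∀ j ∈ bdry c L, h₁ j ≤ h₂ j) (a b : ↥(intr c L) → ℤ) :
    ivWeight c L β (extendI c L h₂ a) * ivWeight c L β (extendI c L h₁ b) ≤
      ivWeight c L β (extendI c L h₁ (a ⊓ b)) * ivWeight c L β (extendI c L h₂ (a ⊔ b)) := by
  simp only [ivWeight, ← Real.exp_add, Real.exp_le_exp, ← mul_add]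
  exact mul_le_mul_of_nonpos_left (energyI_inf_add_energyI_sup_le hle a b) (by linarith)

end Configurations

end IVGFF

open IVGFF in
theorem iv_stochastic_domination_general (L : ℕ) (β : ℝ) (hβ : 0 < β)
    (h₁ h₂ : IVGFF.V → ℤ) (hle : ∀ j ∈ IVGFF.bdry 0 L, h₁ j ≤ h₂ j)
    (g : (IVGFF.V → ℤ) → ℝ) (hbdd : ∃ C : ℝ, ∀ m, |g m| ≤ C)
    (hmono : ∀ m₁ m₂ : IVGFF.V → ℤ,
      (∀ j ∈ IVGFF.box 0 L, m₁ j ≤ m₂ j) → g m₁ ≤ g m₂) :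
    IVGFF.ivExp 0 L β h₁ g ≤ IVGFF.ivExp 0 L β h₂ g := by
  obtain ⟨C, hC⟩ := hbdd
  have hs₁ := summable_ivWeight_extendI (c := 0) (L := L) hβ h₁
  have hs₂ := summable_ivWeight_extendI (c := 0) (L := L) hβ h₂
  rw [ivExp_eq_tsum, ivExp_eq_tsum,
    div_le_div_iff₀ (hs₁.tsum_pos (fun _ => (ivWeight_pos _).le) 0 (ivWeight_pos _))
      (hs₂.tsum_pos (fun _ => (ivWeight_pos _).le) 0 (ivWeight_pos _))]
  exact holley_tsum (fun _ => (ivWeight_pos _).le) (fun _ => (ivWeight_pos _).le) hs₁ hs₂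
    (ivWeight_mul_le_ivWeight_inf_mul_ivWeight_sup hβ.le hle)
    (fun _ => hmono _ _ fun j _ => extendI_le_extendI hle le_rfl j)
    (fun x y hxy => hmono _ _ fun j _ => extendI_le_extendI (fun _ _ => le_rfl) hxy j)
    (fun _ => hC _) (fun _ => hC _)

/-- Monotonicity in the boundary condition: if `h₁ ≤ h₂` on `∂Λ` then
`P^IV_{β,Λ,h₁}` is stochastically dominated by `P^IV_{β,Λ,h₂}`. -/
theorem iv_stochastic_domination (L : ℕ) (hL : 2 < L) (β : ℝ) (hβ : 0 < β)
    (h₁ h₂ : IVGFF.V → ℤ) (hle : ∀ j ∈ IVGFF.bdry 0 L, h₁ j ≤ h₂ j)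
    (g : (IVGFF.V → ℤ) → ℝ) (hbdd : ∃ C : ℝ, ∀ m, |g m| ≤ C)
    (hmono : ∀ m₁ m₂ : IVGFF.V → ℤ,
      (∀ j ∈ IVGFF.box 0 L, m₁ j ≤ m₂ j) → g m₁ ≤ g m₂) :
    IVGFF.ivExp 0 L β h₁ g ≤ IVGFF.ivExp 0 L β h₂ g :=
  iv_stochastic_domination_general L β hβ h₁ h₂ hle g hbdd hmono
end
end

section
/- Let Λ be a square domain, β > 0, and let ρ : Λ → ℤ be a charge density (nonempty support contained in Λ°). Then there exists a function a : Λ → ℝ with supp(a) ⊆ supp(ρ) such that E_β(a, ρ) ≥ ‖ρ‖₂²/(16β), where E_β(a,ρ) = ⟨a,ρ⟩ − (β/2)·Σ_{j∼l} (a_j − a_l)² and ‖ρ‖₂² = Σ_{j∈Λ} ρ_j². -/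
open scoped BigOperators
open MeasureTheory

noncomputable section

namespace IVGFF

attribute [local instance] Classical.propDecidable

end IVGFF

namespace InitialSpinWaveAux

open IVGFF

lemma adj_cases {j l : V} (h : adj j l)
    (ho : j.1 < l.1 ∨ (j.1 = l.1 ∧ j.2 < l.2)) :
    l = (j.1 + 1, j.2) ∨ l = (j.1, j.2 + 1) := by
  unfold adj at h
  rcases abs_cases (j.1 - l.1) with ⟨h1, _⟩ | ⟨h1, _⟩ <;>
    rcases abs_cases (j.2 - l.2) with ⟨h2, _⟩ | ⟨h2, _⟩ <;>
    · simp only [Prod.ext_iff]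
      omega

lemma edges_subset (c : V) (L : ℕ) :
    edges c L ⊆
      (box c L).image (fun j => (j, (j.1 + 1, j.2))) ∪
      (box c L).image (fun j => (j, (j.1, j.2 + 1))) := by
  intro p hp
  simp only [edges, Finset.mem_filter, Finset.mem_product] at hp
  obtain ⟨⟨h1, _⟩, hadj, ho⟩ := hp
  rcases adj_cases hadj ho with h | h
  · apply Finset.mem_union_left
    exact Finset.mem_image.mpr ⟨p.1, h1, by rw [← h]⟩
  · apply Finset.mem_union_right
    exact Finset.mem_image.mpr ⟨p.1, h1, by rw [← h]⟩

lemma sum_le_of_zero_off (s t : Finset V) (f : V → ℝ) (h0 : ∀ j, 0 ≤ f j)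
    (hz : ∀ j ∈ s, j ∉ t → f j = 0) : ∑ j ∈ s, f j ≤ ∑ j ∈ t, f j := by
  classical
  calc ∑ j ∈ s, f j = ∑ j ∈ s.filter (· ∈ t), f j := by
        rw [Finset.sum_filter_of_ne]
        intro j hj hf
        by_contra h
        exact hf (hz j hj h)
    _ ≤ ∑ j ∈ t, f j := Finset.sum_le_sum_of_subset_of_nonneg
        (fun j hj => (Finset.mem_filter.mp hj).2) (fun j _ _ => h0 j)

set_option maxHeartbeats 1000000 in
lemma sum_shift (L : ℕ) (x : V → ℝ) (hx : ∀ j, j ∉ box 0 L → x j = 0)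
    (e : V) :
    ∑ j ∈ box 0 L, x (j.1 + e.1, j.2 + e.2) ^ 2 ≤ ∑ j ∈ box 0 L, x j ^ 2 := by
  classical
  have hinj : ∀ a ∈ box 0 L, ∀ b ∈ box 0 L,
      ((fun j : V => (j.1 + e.1, j.2 + e.2)) a = (fun j : V => (j.1 + e.1, j.2 + e.2)) b)
        → a = b := by
    intro a _ b _ hab
    simp only [Prod.ext_iff] at hab ⊢
    omega
  have himg : ∑ j ∈ (box 0 L).image (fun j : V => (j.1 + e.1, j.2 + e.2)), x j ^ 2
      = ∑ j ∈ box 0 L, x (j.1 + e.1, j.2 + e.2) ^ 2 :=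
    Finset.sum_image (f := fun j : V => x j ^ 2) (g := fun j : V => (j.1 + e.1, j.2 + e.2)) hinj
  rw [← himg]
  apply sum_le_of_zero_off _ _ _ (fun j => sq_nonneg _)
  intro j _ hj
  rw [hx j hj]
  ring

lemma energy_bound (L : ℕ) (x : V → ℝ) (hx : ∀ j, j ∉ box 0 L → x j = 0) :
    energyR 0 L x ≤ 8 * ∑ j ∈ box 0 L, x j ^ 2 := by
  classical
  set N := ∑ j ∈ box 0 L, x j ^ 2 with hN
  set f : V × V → ℝ := fun p => (x p.1 - x p.2) ^ 2 with hf
  have hfnn : ∀ p : V × V, 0 ≤ f p := fun p => sq_nonneg _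
  set E1 := (box 0 L).image (fun j : V => (j, (j.1 + 1, j.2))) with hE1
  set E2 := (box 0 L).image (fun j : V => (j, (j.1, j.2 + 1))) with hE2
  have hsub : edges 0 L ⊆ E1 ∪ E2 := edges_subset 0 L
  have step1 : energyR 0 L x ≤ ∑ p ∈ E1 ∪ E2, f p :=
    Finset.sum_le_sum_of_subset_of_nonneg hsub (fun p _ _ => hfnn p)
  have step2 : ∑ p ∈ E1 ∪ E2, f p ≤ ∑ p ∈ E1, f p + ∑ p ∈ E2, f p := by
    rw [← Finset.union_sdiff_self_eq_union, Finset.sum_union Finset.disjoint_sdiff]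
    have : ∑ p ∈ E2 \ E1, f p ≤ ∑ p ∈ E2, f p :=
      Finset.sum_le_sum_of_subset_of_nonneg Finset.sdiff_subset (fun p _ _ => hfnn p)
    linarith
  have hinj1 : ∀ a ∈ box 0 L, ∀ b ∈ box 0 L,
      ((fun j : V => (j, (j.1 + 1, j.2))) a = (fun j : V => (j, (j.1 + 1, j.2))) b) → a = b := by
    intro a _ b _ hab; exact congrArg Prod.fst hab
  have hinj2 : ∀ a ∈ box 0 L, ∀ b ∈ box 0 L,
      ((fun j : V => (j, (j.1, j.2 + 1))) a = (fun j : V => (j, (j.1, j.2 + 1))) b) → a = b := by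
    intro a _ b _ hab; exact congrArg Prod.fst hab
  have hs1 : ∑ p ∈ E1, f p = ∑ j ∈ box 0 L, (x j - x (j.1 + 1, j.2)) ^ 2 :=
    Finset.sum_image hinj1
  have hs2 : ∑ p ∈ E2, f p = ∑ j ∈ box 0 L, (x j - x (j.1, j.2 + 1)) ^ 2 :=
    Finset.sum_image hinj2
  have hshift1 : ∑ j ∈ box 0 L, x (j.1 + 1, j.2) ^ 2 ≤ N := by
    simpa using sum_shift L x hx (1, 0)
  have hshift2 : ∑ j ∈ box 0 L, x (j.1, j.2 + 1) ^ 2 ≤ N := by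
    simpa using sum_shift L x hx (0, 1)
  have hb1 : ∑ j ∈ box 0 L, (x j - x (j.1 + 1, j.2)) ^ 2
      ≤ ∑ j ∈ box 0 L, (2 * x j ^ 2 + 2 * x (j.1 + 1, j.2) ^ 2) := by
    apply Finset.sum_le_sum
    intro j _
    nlinarith [sq_nonneg (x j + x (j.1 + 1, j.2))]
  have hb2 : ∑ j ∈ box 0 L, (x j - x (j.1, j.2 + 1)) ^ 2
      ≤ ∑ j ∈ box 0 L, (2 * x j ^ 2 + 2 * x (j.1, j.2 + 1) ^ 2) := by
    apply Finset.sum_le_sum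
    intro j _
    nlinarith [sq_nonneg (x j + x (j.1, j.2 + 1))]
  have hsplit1 : ∑ j ∈ box 0 L, (2 * x j ^ 2 + 2 * x (j.1 + 1, j.2) ^ 2)
      = 2 * N + 2 * ∑ j ∈ box 0 L, x (j.1 + 1, j.2) ^ 2 := by
    rw [Finset.sum_add_distrib, ← Finset.mul_sum, ← Finset.mul_sum]
  have hsplit2 : ∑ j ∈ box 0 L, (2 * x j ^ 2 + 2 * x (j.1, j.2 + 1) ^ 2)
      = 2 * N + 2 * ∑ j ∈ box 0 L, x (j.1, j.2 + 1) ^ 2 := by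
    rw [Finset.sum_add_distrib, ← Finset.mul_sum, ← Finset.mul_sum]
  have hE : energyR 0 L x ≤ ∑ p ∈ E1, f p + ∑ p ∈ E2, f p := le_trans step1 step2
  rw [hs1, hs2] at hE
  linarith

end InitialSpinWaveAux

/-- Initial spin wave: for every charge density `ρ` there is a function `a`
supported in `supp(ρ)` with `E_β(a,ρ) ≥ ‖ρ‖₂²/(16β)`. -/
theorem initial_spin_wave (L : ℕ) (hL : 2 < L) (β : ℝ) (hβ : 0 < β)
    (ρ : IVGFF.V → ℤ) (hρ : IVGFF.IsDensity 0 L ρ) :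
    ∃ a : IVGFF.V → ℝ, (∀ j, a j ≠ 0 → ρ j ≠ 0) ∧
      IVGFF.norm2sq 0 L ρ / (16 * β) ≤
        IVGFF.dot 0 L a (fun j => (ρ j : ℝ)) - (β / 2) * IVGFF.energyR 0 L a := by
  classical
  obtain ⟨-, hsupp⟩ := hρ
  set x : IVGFF.V → ℝ := fun j => (ρ j : ℝ) with hxdef
  have hx0 : ∀ j, j ∉ IVGFF.box 0 L → x j = 0 := by
    intro j hj
    simp only [hxdef, Int.cast_eq_zero]
    by_contra h
    exact hj (Finset.mem_sdiff.mp (hsupp j h)).1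
  set N := IVGFF.norm2sq 0 L ρ with hNdef
  have hNx : N = ∑ j ∈ IVGFF.box 0 L, x j ^ 2 := rfl
  have hNnn : 0 ≤ N := Finset.sum_nonneg fun j _ => sq_nonneg _
  have hEb : IVGFF.energyR 0 L x ≤ 8 * N := by
    rw [hNx]; exact InitialSpinWaveAux.energy_bound L x hx0
  have hEnn : 0 ≤ IVGFF.energyR 0 L x := Finset.sum_nonneg fun p _ => sq_nonneg _
  set t : ℝ := 1 / (8 * β) with htdef
  refine ⟨fun j => t * x j, ?_, ?_⟩
  · intro j hj h0
    apply hj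
    simp [hxdef, h0]
  · have hdot : IVGFF.dot 0 L (fun j => t * x j) (fun j => (ρ j : ℝ)) = t * N := by
      rw [hNx, Finset.mul_sum]
      apply Finset.sum_congr rfl
      intro j _
      simp only [hxdef]
      ring
    have hen : IVGFF.energyR 0 L (fun j => t * x j) = t ^ 2 * IVGFF.energyR 0 L x := by
      unfold IVGFF.energyR
      rw [Finset.mul_sum]
      apply Finset.sum_congr rfl
      intro p _
      ring
    rw [hdot, hen, htdef]
    have hβ8 : (8 * β) ≠ 0 := by positivity
    have e1 : (1 / (8 * β)) * N - β / 2 * ((1 / (8 * β)) ^ 2 * IVGFF.energyR 0 L x)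
        - N / (16 * β) = (8 * N - IVGFF.energyR 0 L x) / (128 * β) := by
      field_simp
      ring
    have e2 : 0 ≤ (8 * N - IVGFF.energyR 0 L x) / (128 * β) :=
      div_nonneg (by linarith) (by positivity)
    linarith
end
end
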